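/- arXiv:1909.06156 — 12 statements merged into one kernel-verified Lean document; each statement's English description precedes it below -/
import Mathlib

section
/- Let (Ω, 𝓔, μ) be a complete σ-finite measure space, H a separable complex Hilbert space, and T : Ω → (H →L[ℂ] H) a random bounded operator, i.e. ω ↦ T ω f is measurable for every f ∈ H. Then for every open set U ⊆ ℂ the set {ω ∈ Ω | ∃ z ∈ U, ∃ f ∈ H, f ≠ 0 ∧ T ω f = z • f} (the event that the eigenvalue spectrum of T ω meets U) belongs to 𝓔. In other words, the eigenvalue spectrum of a random bounded operator is a random set. -/
open MeasureTheory

/-!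
The event is the projection to `Ω` of the measurable set
`{(ω, z, f) | z ∈ U, f ≠ 0, T ω f = z • f} ⊆ Ω × (ℂ × H)`, so it suffices to prove the measurable
projection theorem along a Polish factor `Y`. A measurable `A ⊆ Ω × Y` is the preimage of a Borel
set `B ⊆ (ℕ → Bool) × Y` under `g × id` for a measurable code `g : Ω → ℕ → Bool`, so its
projection is the preimage under `g` of the analytic set `Prod.fst '' B`. Analytic sets are
null-measurable for every finite Borel measure (Choquet capacitability: a continuous image of
`ℕ → ℕ` is approximated from inside by images of compact boxes, obtained by bounding one
coordinate at a time), and completeness of `μ` upgrades the null-measurable preimage to a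
measurable one.
-/

open Set PiNat
open scoped ENNReal

theorem MeasurableSet.exists_eq_preimage_prodMap_cantor {Ω Y : Type*} [MeasurableSpace Ω]
    [MeasurableSpace Y] {A : Set (Ω × Y)} (hA : MeasurableSet A) :
    ∃ g : Ω → ℕ → Bool, Measurable g ∧
      ∃ B : Set ((ℕ → Bool) × Y), MeasurableSet B ∧ A = Prod.map g id ⁻¹' B := by
  rw [← generateFrom_prod] at hA
  induction hA with
  | basic u hu =>
    classical
    obtain ⟨s, hs, t, ht, rfl⟩ := hu
    refine ⟨fun ω _ => decide (ω ∈ s), measurable_pi_iff.2 fun _ => ?_,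
      {x : ℕ → Bool | x 0 = true} ×ˢ t, ?_, ?_⟩
    · exact measurable_to_bool (by simpa [preimage] using hs)
    · exact ((measurable_pi_apply 0 : Measurable fun x : ℕ → Bool => x 0)
        (measurableSet_singleton true)).prod ht
    · ext ⟨ω, y⟩; simp
  | empty => exact ⟨fun _ _ => false, measurable_const, ∅, .empty, rfl⟩
  | compl u _ ih =>
    obtain ⟨g, hg, B, hB, rfl⟩ := ih
    exact ⟨g, hg, Bᶜ, hB.compl, rfl⟩
  | iUnion s _ ih =>
    choose g hg B hB hsB using ih
    -- interleave the countably many codes `g n` into one via `Nat.pair`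
    let split (x : ℕ → Bool) (n : ℕ) : ℕ → Bool := fun i => x (Nat.pair n i)
    have hsplit (n : ℕ) : Measurable (split · n) :=
      measurable_pi_iff.2 fun _ => measurable_pi_apply _
    refine ⟨fun ω k => g k.unpair.1 ω k.unpair.2,
      measurable_pi_iff.2 fun k => (measurable_pi_apply _).comp (hg _),
      ⋃ n, (Prod.map (split · n) id) ⁻¹' B n,
      .iUnion fun n => ((hsplit n).prodMap measurable_id) (hB n), ?_⟩
    ext ⟨ω, y⟩
    simp [hsB, split, Nat.unpair_pair]

theorem MeasureTheory.exists_measure_le_measure_add_of_monotone {α : Type*} [MeasurableSpace α]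
    {ν : Measure α} {s : ℕ → Set α} (hs : Monotone s) (hfin : ν (⋃ j, s j) ≠ ∞) {ε : ℝ≥0∞}
    (hε : ε ≠ 0) : ∃ j, ν (⋃ j, s j) ≤ ν (s j) + ε := by
  by_cases h0 : ν (⋃ j, s j) = 0
  · exact ⟨0, by simp [h0]⟩
  obtain ⟨j, hj⟩ := ((tendsto_measure_iUnion_atTop hs).eventually
    (lt_mem_nhds (ENNReal.sub_lt_self hfin h0 hε))).exists
  exact ⟨j, tsub_le_iff_right.1 hj.le⟩

theorem exists_forall_lt_le_subset_of_isOpen {N : ℕ → ℕ} {V : Set (ℕ → ℕ)} (hV : IsOpen V)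
    (hNV : {x | ∀ i, x i ≤ N i} ⊆ V) : ∃ m, {x | ∀ i < m, x i ≤ N i} ⊆ V := by
  have hcyl (c : ℕ → ℕ) : ∃ n, c ∈ V → cylinder c n ⊆ V := by
    by_cases hc : c ∈ V
    · obtain ⟨_, ⟨x, n, rfl⟩, hcx, hxV⟩ :=
        (isTopologicalBasis_cylinders _).exists_subset_of_mem_open hc hV
      exact ⟨n, fun _ => (mem_cylinder_iff_eq.1 hcx).trans_subset hxV⟩
    · exact ⟨0, fun h => absurd h hc⟩
  choose n hn using hcyl
  have hC : IsCompact {x : ℕ → ℕ | ∀ i, x i ≤ N i} := by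
    simpa [Set.pi, Iic] using isCompact_univ_pi fun i => (finite_Iic (N i)).isCompact
  obtain ⟨t, htC, hCt⟩ := hC.elim_nhds_subcover (fun c => cylinder c (n c))
    fun c _ => (isOpen_cylinder _ c _).mem_nhds (self_mem_cylinder c _)
  refine ⟨t.sup n, fun x hx => ?_⟩
  -- truncating `x` at `N` lands in the compact box without changing the first `t.sup n` entries
  have hxC : (fun i => min (x i) (N i)) ∈ {x : ℕ → ℕ | ∀ i, x i ≤ N i} :=
    fun i => min_le_right _ _
  obtain ⟨c, hct, hxc⟩ := mem_iUnion₂.1 (hCt hxC)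
  refine hn c (hNV (htC c hct)) (mem_cylinder_iff.2 fun i hi => ?_)
  have hi' : i < t.sup n := hi.trans_le (Finset.le_sup hct)
  rw [← mem_cylinder_iff.1 hxc i hi, min_eq_left (hx i hi')]

theorem MeasureTheory.exists_forall_measure_range_le_measure_image_add {γ : Type*}
    [MeasurableSpace γ] (f : (ℕ → ℕ) → γ) (ν : Measure γ) [IsFiniteMeasure ν] {ε : ℝ≥0∞}
    (hε : ε ≠ 0) : ∃ N : ℕ → ℕ, ∀ m, ν (range f) ≤ ν (f '' {x | ∀ i < m, x i ≤ N i}) + ε := by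
  obtain ⟨δ, hδ, hδε⟩ := ENNReal.exists_pos_sum_of_countable hε ℕ
  have step (E : Set (ℕ → ℕ)) (m : ℕ) :
      ∃ j, ν (f '' E) ≤ ν (f '' (E ∩ {x | x m ≤ j})) + δ m := by
    have hmono : Monotone fun j => f '' (E ∩ {x | x m ≤ j}) := fun a b hab =>
      image_mono (inter_subset_inter_right E fun x hx => le_trans hx hab)
    have hunion : ⋃ j, f '' (E ∩ {x | x m ≤ j}) = f '' E := by
      rw [← image_iUnion, ← inter_iUnion,
        iUnion_eq_univ_iff.2 fun x => ⟨x m, show x m ≤ x m from le_rfl⟩, inter_univ]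
    simpa only [hunion] using exists_measure_le_measure_add_of_monotone hmono
      (measure_ne_top ν _) (by simpa using (hδ m).ne')
  choose J hJ using step
  -- the greedy choice of coordinate bounds: `E (m + 1)` caps coordinate `m` of `E m`
  let E (m : ℕ) : Set (ℕ → ℕ) :=
    Nat.rec (motive := fun _ => Set (ℕ → ℕ)) univ (fun m Em => Em ∩ {x | x m ≤ J Em m}) m
  let N (m : ℕ) : ℕ := J (E m) m
  have hE (m : ℕ) : E m = {x | ∀ i < m, x i ≤ N i} := by
    induction m with
    | zero => simp [E]
    | succ m ih =>
      change E m ∩ {x | x m ≤ N m} = _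
      ext x
      rw [ih]
      exact Nat.forall_lt_succ_right.symm
  refine ⟨N, fun m => ?_⟩
  suffices ν (range f) ≤ ν (f '' E m) + ∑ i ∈ Finset.range m, (δ i : ℝ≥0∞) by
    rw [← hE]
    exact this.trans (by gcongr; exact (ENNReal.sum_le_tsum _).trans hδε.le)
  induction m with
  | zero => simp [E]
  | succ m ih =>
    calc ν (range f) ≤ ν (f '' E m) + ∑ i ∈ Finset.range m, (δ i : ℝ≥0∞) := ih
      _ ≤ ν (f '' E (m + 1)) + δ m + ∑ i ∈ Finset.range m, (δ i : ℝ≥0∞) := by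
        gcongr; exact hJ (E m) m
      _ = ν (f '' E (m + 1)) + ∑ i ∈ Finset.range (m + 1), (δ i : ℝ≥0∞) := by
        rw [Finset.sum_range_succ]; ring

theorem MeasureTheory.exists_isCompact_subset_range_measure_le_add {γ : Type*}
    [TopologicalSpace γ] [MeasurableSpace γ] {f : (ℕ → ℕ) → γ} (hf : Continuous f)
    (ν : Measure γ) [IsFiniteMeasure ν] [ν.OuterRegular] {ε : ℝ≥0∞} (hε : ε ≠ 0) :
    ∃ K, IsCompact K ∧ K ⊆ range f ∧ ν (range f) ≤ ν K + ε := by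
  obtain ⟨N, hN⟩ := exists_forall_measure_range_le_measure_image_add f ν hε
  set K := f '' {x | ∀ i, x i ≤ N i}
  have hC : IsCompact {x : ℕ → ℕ | ∀ i, x i ≤ N i} := by
    simpa [Set.pi, Iic] using isCompact_univ_pi fun i => (finite_Iic (N i)).isCompact
  refine ⟨K, hC.image hf, image_subset_range _ _, ENNReal.le_of_forall_pos_le_add fun η hη _ => ?_⟩
  obtain ⟨W, hKW, hW, hWη⟩ := Set.exists_isOpen_lt_of_lt K _
    (ENNReal.lt_add_right (measure_ne_top ν K) (ENNReal.coe_ne_zero.2 hη.ne'))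
  obtain ⟨m, hm⟩ := exists_forall_lt_le_subset_of_isOpen (hW.preimage hf)
    (image_subset_iff.1 hKW)
  calc ν (range f) ≤ ν (f '' {x | ∀ i < m, x i ≤ N i}) + ε := hN m
    _ ≤ ν W + ε := by gcongr; exact image_subset_iff.2 hm
    _ ≤ ν K + η + ε := by gcongr
    _ = ν K + ε + η := add_right_comm _ _ _

theorem MeasureTheory.AnalyticSet.nullMeasurableSet {γ : Type*} [TopologicalSpace γ]
    [PolishSpace γ] [MeasurableSpace γ] [BorelSpace γ] {S : Set γ} (hS : AnalyticSet S)
    (ν : Measure γ) [IsFiniteMeasure ν] : NullMeasurableSet S ν := by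
  rw [AnalyticSet] at hS
  rcases hS with rfl | ⟨f, hf, rfl⟩
  · exact .empty
  have hK (n : ℕ) : ∃ K, IsCompact K ∧ K ⊆ range f ∧ ν (range f) ≤ ν K + (n : ℝ≥0∞)⁻¹ :=
    exists_isCompact_subset_range_measure_le_add hf ν (by simp)
  choose K hKc hKf hνK using hK
  have hKm : MeasurableSet (⋃ n, K n) := .iUnion fun n => (hKc n).isClosed.measurableSet
  have hle : ν (range f) ≤ ν (⋃ n, K n) := by
    refine ge_of_tendsto'
      (by simpa using tendsto_const_nhds.add ENNReal.tendsto_inv_nat_nhds_zero) fun n =>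
        (hνK n).trans (by gcongr; exact subset_iUnion K n)
  exact hKm.nullMeasurableSet.congr
    (ae_eq_of_subset_of_measure_ge (iUnion_subset hKf) hle hKm.nullMeasurableSet
      (measure_ne_top ν _))

theorem MeasureTheory.AnalyticSet.measurableSet_preimage {Ω γ : Type*} [MeasurableSpace Ω]
    (μ : Measure Ω) [SFinite μ] [μ.IsComplete] [TopologicalSpace γ] [PolishSpace γ]
    [MeasurableSpace γ] [BorelSpace γ] {g : Ω → γ} (hg : Measurable g) {S : Set γ}
    (hS : AnalyticSet S) : MeasurableSet (g ⁻¹' S) :=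
  (((hS.nullMeasurableSet (μ.toFinite.map g)).preimage (hg.quasiMeasurePreserving _)).mono_ac
    (absolutelyContinuous_toFinite μ)).measurable_of_complete

theorem MeasurableSet.image_fst {Ω Y : Type*} [MeasurableSpace Ω] (μ : Measure Ω) [SFinite μ]
    [μ.IsComplete] [TopologicalSpace Y] [PolishSpace Y] [MeasurableSpace Y] [BorelSpace Y]
    {A : Set (Ω × Y)} (hA : MeasurableSet A) : MeasurableSet (Prod.fst '' A) := by
  obtain ⟨g, hg, B, hB, rfl⟩ := hA.exists_eq_preimage_prodMap_cantor
  have hproj : Prod.fst '' (Prod.map g id ⁻¹' B) = g ⁻¹' (Prod.fst '' B) := by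
    ext ω
    simp
  rw [hproj]
  -- instance search does not reach `PolishSpace (ℕ → Bool)` on its own
  have : PolishSpace Bool := inferInstance
  exact (hB.analyticSet.image_of_continuous continuous_fst).measurableSet_preimage μ hg

/-- The eigenvalue spectrum of a random bounded operator is a random set:
for a complete σ-finite measure space `(Ω, 𝓔, μ)`, a separable complex Hilbert
space `H`, and a random bounded operator `T` (i.e. `ω ↦ T ω f` is measurable
for every `f`), the event that the eigenvalue spectrum of `T ω` meets a given
open set `U ⊆ ℂ` is measurable. -/
theorem eigenvalue_spectrum_is_random_set
    {Ω : Type*} [MeasurableSpace Ω] (μ : Measure Ω) [SigmaFinite μ]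
    (hμ : μ.IsComplete)
    {H : Type*} [NormedAddCommGroup H] [InnerProductSpace ℂ H] [CompleteSpace H]
    [SecondCountableTopology H] [MeasurableSpace H] [BorelSpace H]
    (T : Ω → (H →L[ℂ] H)) (hT : ∀ f : H, Measurable fun ω => T ω f)
    (U : Set ℂ) (hU : IsOpen U) :
    MeasurableSet {ω : Ω | ∃ z ∈ U, ∃ f : H, f ≠ 0 ∧ T ω f = z • f} := by
  have hTapply : Measurable fun p : Ω × (ℂ × H) => T p.1 p.2.2 :=
    (measurable_uncurry_of_continuous_of_measurable (fun ω => (T ω).continuous) hT).comp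
      (measurable_snd.snd.prodMk measurable_fst)
  have hA : MeasurableSet
      {p : Ω × (ℂ × H) | p.2.1 ∈ U ∧ p.2.2 ≠ 0 ∧ T p.1 p.2.2 = p.2.1 • p.2.2} :=
    (measurable_snd.fst hU.measurableSet).inter
      ((measurable_snd.snd (measurableSet_singleton 0)).compl.inter
        (measurableSet_eq_fun hTapply (measurable_snd.fst.smul measurable_snd.snd)))
  convert hA.image_fst μ using 1
  ext ω
  simp
end

section
/- Let (Ω, 𝓔, μ) be a complete σ-finite measure space, H a separable complex Hilbert space, and T : Ω → (H →L[ℂ] H) a random bounded operator, i.e. ω ↦ T ω f is measurable for every f ∈ H. Then for every open set U ⊆ ℂ the set {ω ∈ Ω | (spectrum ℂ (T ω) ∩ U).Nonempty} belongs to 𝓔. In other words, the spectrum of a random bounded operator is a random set. -/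
/-!
For an operator `B` on a Hilbert space let `m B = ⨅ ‖x‖ = 1, ‖B x‖`. Then `B` is invertible iff
`m B > 0` and `m B† > 0`, and `B ↦ min (m B) (m B†)` is 1-Lipschitz, so the spectrum of `A` is the
zero set of the continuous function `z ↦ min (m (z - A)) (m (z - A)†)`. Both infima may be taken
over a countable dense subset of the unit sphere, and `‖y‖` is the supremum of `‖⟪x, y⟫‖` over
that subset; this makes the function measurable in `ω` when `A = T ω`. Finally, since closed balls
of `ℂ` are compact, whether a continuous function vanishes somewhere in an open set is decided by
countably many conditions on its values at a countable dense set.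
-/

open MeasureTheory Metric Filter Topology

section ZeroSet

variable {X : Type*} [MetricSpace X] [ProperSpace X]

theorem exists_mem_open_zero_iff_dense {c : ℕ → X} (hc : DenseRange c) {g : X → ℝ}
    (hg : Continuous g) {U : Set X} (hU : IsOpen U) :
    (∃ x ∈ U, g x = 0) ↔ ∃ n : ℕ, ∀ k : ℕ, ∃ j : ℕ,
      closedBall (c j) (1 / (n + 1)) ⊆ U ∧ dist (c j) (c 0) ≤ n ∧ |g (c j)| < 1 / (k + 1) := by
  constructor
  · rintro ⟨w, hwU, hgw⟩
    obtain ⟨ε, hε, hball⟩ := Metric.isOpen_iff.1 hU w hwU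
    obtain ⟨m, hm⟩ := exists_nat_one_div_lt (half_pos hε)
    obtain ⟨m', hm'⟩ := exists_nat_ge (dist w (c 0) + 1)
    set n := max m m'
    have hn : (1 : ℝ) / (n + 1) < ε / 2 :=
      lt_of_le_of_lt (Nat.one_div_le_one_div (le_max_left m m')) hm
    have hn1 : (1 : ℝ) / (n + 1) ≤ 1 := by
      rw [div_le_one (by positivity)]; linarith [n.cast_nonneg (α := ℝ)]
    refine ⟨n, fun k => ?_⟩
    obtain ⟨δ, hδ, hgδ⟩ := Metric.continuous_iff.1 hg w (1 / (k + 1)) (by positivity)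
    obtain ⟨j, hj⟩ := hc.exists_dist_lt w (lt_min hδ (by positivity : (0 : ℝ) < 1 / (n + 1)))
    rw [dist_comm] at hj
    refine ⟨j, fun y hy => hball ?_, ?_, ?_⟩
    · rw [mem_closedBall] at hy
      rw [mem_ball]
      linarith [dist_triangle y (c j) w, min_le_right δ (1 / (n + 1))]
    · have : (m' : ℝ) ≤ n := by exact_mod_cast le_max_right m m'
      linarith [dist_triangle (c j) w (c 0), min_le_right δ (1 / (n + 1))]
    · simpa [hgw] using hgδ (c j) (hj.trans_le (min_le_left _ _))
  · rintro ⟨n, hn⟩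
    choose j hjU hjbdd hjg using hn
    obtain ⟨w, -, φ, hφ, hlim⟩ := (isCompact_closedBall (c 0) n).tendsto_subseq hjbdd
    have hgw : Tendsto (fun k => g (c (j (φ k)))) atTop (𝓝 0) :=
      squeeze_zero_norm (fun k => (hjg (φ k)).le)
        (tendsto_one_div_add_atTop_nhds_zero_nat.comp hφ.tendsto_atTop)
    refine ⟨w, ?_, tendsto_nhds_unique ((hg.tendsto w).comp hlim) hgw⟩
    obtain ⟨k, hk⟩ := (Metric.tendsto_atTop.1 hlim) (1 / (n + 1)) (by positivity)
    exact hjU (φ k) (mem_closedBall.2 ((dist_comm _ _).trans_le (hk k le_rfl).le))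

theorem measurableSet_exists_mem_open_zero {Ω : Type*} [MeasurableSpace Ω] {g : Ω → X → ℝ}
    (hg : ∀ ω, Continuous (g ω)) (hgm : ∀ x, Measurable fun ω => g ω x) {U : Set X}
    (hU : IsOpen U) : MeasurableSet {ω | ∃ x ∈ U, g ω x = 0} := by
  rcases isEmpty_or_nonempty X with _ | _
  · simp
  simp only [exists_mem_open_zero_iff_dense (TopologicalSpace.denseRange_denseSeq X) (hg _) hU,
    Set.ofPred_exists, Set.ofPred_forall, Set.ofPred_and]
  exact .iUnion fun n => .iInter fun k => .iUnion fun j => (MeasurableSet.const _).inter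
    ((MeasurableSet.const _).inter (measurableSet_lt (hgm _).abs measurable_const))

end ZeroSet

namespace ContinuousLinearMap

section MinModulus

variable {𝕜 E F : Type*} [RCLike 𝕜] [NormedAddCommGroup E] [NormedSpace 𝕜 E]
  [NormedAddCommGroup F] [NormedSpace 𝕜 F]

noncomputable def minModulus (B : E →L[𝕜] F) : ℝ := ⨅ x : sphere (0 : E) 1, ‖B x‖

theorem minModulus_nonneg (B : E →L[𝕜] F) : 0 ≤ B.minModulus :=
  Real.iInf_nonneg fun _ => norm_nonneg _

theorem minModulus_le_norm_apply (B : E →L[𝕜] F) {x : E} (hx : ‖x‖ = 1) :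
    B.minModulus ≤ ‖B x‖ :=
  ciInf_le ⟨0, by rintro _ ⟨y, rfl⟩; exact norm_nonneg _⟩
    (⟨x, by simpa using hx⟩ : sphere (0 : E) 1)

theorem le_minModulus [Nontrivial E] (B : E →L[𝕜] F) {c : ℝ} (h : ∀ x, ‖x‖ = 1 → c ≤ ‖B x‖) :
    c ≤ B.minModulus :=
  have : Nonempty (sphere (0 : E) 1) := NormedSpace.sphere_nonempty_rclike 𝕜 zero_le_one
  le_ciInf fun x => h x (by simp)

theorem minModulus_mul_norm_le (B : E →L[𝕜] F) (x : E) : B.minModulus * ‖x‖ ≤ ‖B x‖ := by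
  rcases eq_or_ne x 0 with rfl | hx
  · simp
  have h := B.minModulus_le_norm_apply (norm_smul_inv_norm (𝕜 := 𝕜) hx)
  rw [map_smul, norm_smul, norm_inv, RCLike.norm_ofReal, abs_norm] at h
  rwa [← le_div_iff₀ (norm_pos_iff.2 hx), div_eq_inv_mul]

theorem minModulus_pos_iff [Nontrivial E] (B : E →L[𝕜] F) :
    0 < B.minModulus ↔ ∃ K, AntilipschitzWith K B := by
  rw [antilipschitzWith_iff_exists_mul_le_norm]
  refine ⟨fun h => ⟨_, h, B.minModulus_mul_norm_le⟩, fun ⟨c, hc, hB⟩ => ?_⟩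
  exact hc.trans_le (B.le_minModulus fun x hx => by simpa [hx] using hB x)

theorem minModulus_pos_of_isUnit [Nontrivial E] {B : E →L[𝕜] E} (hB : IsUnit B) :
    0 < B.minModulus := by
  obtain ⟨u, rfl⟩ := hB
  exact (minModulus_pos_iff _).2 ⟨_, (ContinuousLinearEquiv.unitsEquiv 𝕜 E u).antilipschitz⟩

theorem minModulus_le_add_norm_sub [Nontrivial E] (B C : E →L[𝕜] F) :
    B.minModulus ≤ C.minModulus + ‖B - C‖ := by
  rw [← sub_le_iff_le_add]
  refine C.le_minModulus fun x hx => ?_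
  have h := (B - C).le_opNorm x
  rw [hx, mul_one, sub_apply] at h
  linarith [B.minModulus_le_norm_apply hx, norm_le_norm_add_norm_sub' (B x) (C x)]

theorem minModulus_eq_iInf_of_dense (B : E →L[𝕜] F) {S : Set (sphere (0 : E) 1)} (hS : Dense S) :
    B.minModulus = ⨅ x : S, ‖B x‖ :=
  (hS.ciInf' (by fun_prop)).symm

end MinModulus

section Hilbert

variable {𝕜 E : Type*} [RCLike 𝕜] [NormedAddCommGroup E] [InnerProductSpace 𝕜 E]

theorem norm_eq_iSup_norm_inner_of_dense [Nontrivial E] {S : Set (sphere (0 : E) 1)} (hS : Dense S)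
    (y : E) : ‖y‖ = ⨆ x : S, ‖inner 𝕜 (x : E) y‖ := by
  rw [hS.ciSup' (f := fun x : sphere (0 : E) 1 => ‖inner 𝕜 (x : E) y‖) (by fun_prop)]
  have : Nonempty (sphere (0 : E) 1) := NormedSpace.sphere_nonempty_rclike 𝕜 zero_le_one
  have hle : ∀ x : sphere (0 : E) 1, ‖inner 𝕜 (x : E) y‖ ≤ ‖y‖ := fun x => by
    simpa using norm_inner_le_norm (𝕜 := 𝕜) (x : E) y
  refine le_antisymm ?_ (ciSup_le hle)
  rcases eq_or_ne y 0 with rfl | hy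
  · simp only [norm_zero]
    exact Real.iSup_nonneg fun x : sphere (0 : E) 1 => norm_nonneg (inner 𝕜 (x : E) 0)
  refine le_ciSup_of_le ⟨‖y‖, Set.forall_mem_range.2 hle⟩
    ⟨_, mem_sphere_zero_iff_norm.2 (norm_smul_inv_norm (𝕜 := 𝕜) hy)⟩ ?_
  rw [inner_smul_left, norm_mul, inner_self_eq_norm_sq_to_K]
  simp [pow_two, inv_mul_cancel_left₀ (norm_ne_zero_iff.2 hy)]

variable [CompleteSpace E]

theorem isUnit_iff_minModulus_pos [Nontrivial E] (B : E →L[𝕜] E) :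
    IsUnit B ↔ 0 < B.minModulus ∧ 0 < (adjoint B).minModulus := by
  refine ⟨fun hB => ⟨minModulus_pos_of_isUnit hB, minModulus_pos_of_isUnit ?_⟩, ?_⟩
  · simpa only [star_eq_adjoint] using hB.star
  rintro ⟨hB, hB'⟩
  rw [isUnit_iff_bijective, bijective_iff_dense_range_and_antilipschitz,
    Submodule.topologicalClosure_eq_top_iff, orthogonal_range, LinearMap.ker_eq_bot]
  obtain ⟨K, hK⟩ := (minModulus_pos_iff _).1 hB'
  exact ⟨hK.injective, (minModulus_pos_iff B).1 hB⟩

noncomputable def invertibilityModulus (B : E →L[𝕜] E) : ℝ :=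
  min B.minModulus (adjoint B).minModulus

theorem invertibilityModulus_nonneg (B : E →L[𝕜] E) : 0 ≤ B.invertibilityModulus :=
  le_min B.minModulus_nonneg (adjoint B).minModulus_nonneg

theorem invertibilityModulus_pos_iff [Nontrivial E] (B : E →L[𝕜] E) :
    0 < B.invertibilityModulus ↔ IsUnit B := by
  rw [invertibilityModulus, lt_min_iff, isUnit_iff_minModulus_pos]

theorem lipschitzWith_invertibilityModulus [Nontrivial E] :
    LipschitzWith 1 (invertibilityModulus : (E →L[𝕜] E) → ℝ) := by
  refine LipschitzWith.of_le_add fun B C => ?_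
  have hadj : ‖adjoint B - adjoint C‖ = dist B C := by
    rw [← map_sub, LinearIsometryEquiv.norm_map, dist_eq_norm]
  rw [invertibilityModulus, invertibilityModulus, ← min_add_add_right]
  exact min_le_min ((B.minModulus_le_add_norm_sub C).trans_eq (by rw [dist_eq_norm]))
    (((adjoint B).minModulus_le_add_norm_sub (adjoint C)).trans_eq (by rw [hadj]))

theorem invertibilityModulus_algebraMap_sub_eq_zero_iff [Nontrivial E] (A : E →L[𝕜] E) (z : 𝕜) :
    (algebraMap 𝕜 (E →L[𝕜] E) z - A).invertibilityModulus = 0 ↔ z ∈ spectrum 𝕜 A := by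
  rw [spectrum.mem_iff, ← invertibilityModulus_pos_iff, (invertibilityModulus_nonneg _).lt_iff_ne',
    not_not]

theorem continuous_invertibilityModulus_algebraMap_sub [Nontrivial E] (A : E →L[𝕜] E) :
    Continuous fun z : 𝕜 => (algebraMap 𝕜 (E →L[𝕜] E) z - A).invertibilityModulus :=
  lipschitzWith_invertibilityModulus.continuous.comp
    ((continuous_algebraMap 𝕜 (E →L[𝕜] E)).sub continuous_const)

theorem measurable_invertibilityModulus [Nontrivial E] [SecondCountableTopology E]
    [MeasurableSpace E] [BorelSpace E] {Ω : Type*} [MeasurableSpace Ω] {R : Ω → E →L[𝕜] E}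
    (hR : ∀ f, Measurable fun ω => R ω f) : Measurable fun ω => (R ω).invertibilityModulus := by
  obtain ⟨S, hSc, hS⟩ := TopologicalSpace.exists_countable_dense (sphere (0 : E) 1)
  have := hSc.to_subtype
  have hmin : Measurable fun ω => (R ω).minModulus := by
    simp_rw [minModulus_eq_iInf_of_dense _ hS]
    exact .iInf fun x => (hR x).norm
  have hmin_adj : Measurable fun ω => (adjoint (R ω)).minModulus := by
    simp_rw [minModulus_eq_iInf_of_dense _ hS, norm_eq_iSup_norm_inner_of_dense (𝕜 := 𝕜) hS,
      adjoint_inner_right]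
    exact .iInf fun x => .iSup fun y => ((hR y).inner measurable_const).norm
  exact hmin.min hmin_adj

end Hilbert

end ContinuousLinearMap

open ContinuousLinearMap

theorem spectrum_of_random_bounded_operator_is_random_set_general
    {Ω : Type*} [MeasurableSpace Ω]
    {H : Type*} [NormedAddCommGroup H] [InnerProductSpace ℂ H] [CompleteSpace H]
    [SecondCountableTopology H] [MeasurableSpace H] [BorelSpace H]
    (T : Ω → (H →L[ℂ] H)) (hT : ∀ f : H, Measurable fun ω => T ω f)
    (U : Set ℂ) (hU : IsOpen U) :
    MeasurableSet {ω : Ω | (spectrum ℂ (T ω) ∩ U).Nonempty} := by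
  rcases subsingleton_or_nontrivial H with _ | _
  · simp [spectrum.of_subsingleton]
  have hspec : ∀ ω, (spectrum ℂ (T ω) ∩ U).Nonempty ↔
      ∃ z ∈ U, (algebraMap ℂ (H →L[ℂ] H) z - T ω).invertibilityModulus = 0 := fun ω => by
    simp only [invertibilityModulus_algebraMap_sub_eq_zero_iff, Set.Nonempty, Set.mem_inter_iff,
      and_comm]
  have hrandom : ∀ z f, Measurable fun ω => (algebraMap ℂ (H →L[ℂ] H) z - T ω) f := by
    intro z f
    simp only [sub_apply, ContinuousLinearMap.algebraMap_apply]
    exact measurable_const.sub (hT f)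
  simp_rw [hspec]
  exact measurableSet_exists_mem_open_zero
    (fun ω => continuous_invertibilityModulus_algebraMap_sub (T ω))
    (fun z => measurable_invertibilityModulus (hrandom z)) hU

/-- The spectrum of a random bounded operator is a random set: for a complete
σ-finite measure space, a separable complex Hilbert space `H`, and a random
bounded operator `T`, the event that `spectrum ℂ (T ω)` meets a given open set
`U ⊆ ℂ` is measurable. -/
theorem spectrum_of_random_bounded_operator_is_random_set
    {Ω : Type*} [MeasurableSpace Ω] (μ : Measure Ω) [SigmaFinite μ]
    (hμ : μ.IsComplete)
    {H : Type*} [NormedAddCommGroup H] [InnerProductSpace ℂ H] [CompleteSpace H]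
    [SecondCountableTopology H] [MeasurableSpace H] [BorelSpace H]
    (T : Ω → (H →L[ℂ] H)) (hT : ∀ f : H, Measurable fun ω => T ω f)
    (U : Set ℂ) (hU : IsOpen U) :
    MeasurableSet {ω : Ω | (spectrum ℂ (T ω) ∩ U).Nonempty} :=
  spectrum_of_random_bounded_operator_is_random_set_general T hT U hU
end

section
/- Let (Ω, 𝓔, μ) be a complete σ-finite measure space, H a separable complex Hilbert space, and T : Ω → (H →ₗ.[ℂ] H) a random closed operator, i.e. each T ω has closed graph in H × H and ω ↦ (graph of T ω) is a random set. For each ω define the approximate point spectrum σ_ap(T ω) = {z ∈ ℂ | ∀ ε > 0, ∃ f ∈ dom(T ω), ‖f‖ = 1 ∧ ‖z • f − T ω f‖ < ε}. Then for every open set U ⊆ ℂ the set {ω ∈ Ω | (σ_ap(T ω) ∩ U).Nonempty} belongs to 𝓔; i.e. ω ↦ σ_ap(T ω) is a random set. -/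
open MeasureTheory

/-- Scaling lemma: a point of the graph with small relative defect yields a
unit vector in the domain with small defect. -/
private lemma aux_scale {H : Type*} [NormedAddCommGroup H] [InnerProductSpace ℂ H]
    (T : H →ₗ.[ℂ] H) (z : ℂ) (ε : ℝ)
    (p : H × H) (hp : p ∈ T.graph) (hlt : ‖z • p.1 - p.2‖ < ‖p.1‖ * ε) :
    ∃ f : T.domain, ‖(f : H)‖ = 1 ∧ ‖z • (f : H) - T f‖ < ε := by
  have hpos : 0 < ‖p.1‖ := by
    rcases (norm_nonneg p.1).lt_or_eq with h | h
    · exact h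
    · exfalso
      have h0 : 0 ≤ ‖z • p.1 - p.2‖ := norm_nonneg _
      rw [← h] at hlt
      simp at hlt
      linarith
  obtain ⟨x, hx1, hx2⟩ := T.mem_graph_iff.mp hp
  set c : ℂ := ((‖p.1‖ : ℂ))⁻¹ with hc
  have hcn : ‖c‖ = ‖p.1‖⁻¹ := by
    rw [hc, norm_inv, Complex.norm_real, Real.norm_of_nonneg (norm_nonneg _)]
  refine ⟨c • x, ?_, ?_⟩
  · have : ((c • x : T.domain) : H) = c • (x : H) := rfl
    rw [this, hx1, norm_smul, hcn, inv_mul_cancel₀ hpos.ne']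
  · have hT : T (c • x) = c • T x := T.map_smul c x
    have hcoe : ((c • x : T.domain) : H) = c • (x : H) := rfl
    have heq : z • ((c • x : T.domain) : H) - T (c • x) = c • (z • p.1 - p.2) := by
      rw [hcoe, hT, hx1, hx2, smul_comm z c, smul_sub]
    rw [heq, norm_smul, hcn]
    calc ‖p.1‖⁻¹ * ‖z • p.1 - p.2‖ < ‖p.1‖⁻¹ * (‖p.1‖ * ε) := by
          exact mul_lt_mul_of_pos_left hlt (by positivity)
      _ = ε := by field_simp

/-- The approximate point spectrum of a random closed operator is a random set:
for a complete σ-finite measure space, a separable complex Hilbert space `H`,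
and a random closed operator `T`, the event that
`σ_ap(T ω) = {z | ∀ ε > 0, ∃ f ∈ dom (T ω), ‖f‖ = 1 ∧ ‖z • f - T ω f‖ < ε}`
meets a given open set `U ⊆ ℂ` is measurable. -/
theorem approximate_point_spectrum_is_random_set
    {Ω : Type*} [MeasurableSpace Ω] (μ : Measure Ω) [SigmaFinite μ]
    (hμ : μ.IsComplete)
    {H : Type*} [NormedAddCommGroup H] [InnerProductSpace ℂ H] [CompleteSpace H]
    [SecondCountableTopology H]
    (T : Ω → (H →ₗ.[ℂ] H))
    (hclosed : ∀ ω, IsClosed ((T ω).graph : Set (H × H)))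
    (hrandom : ∀ V : Set (H × H), IsOpen V →
      MeasurableSet {ω : Ω | (((T ω).graph : Set (H × H)) ∩ V).Nonempty})
    (U : Set ℂ) (hU : IsOpen U) :
    MeasurableSet {ω : Ω |
      ({z : ℂ | ∀ ε > 0, ∃ f : (T ω).domain,
        ‖(f : H)‖ = 1 ∧ ‖z • (f : H) - T ω f‖ < ε} ∩ U).Nonempty} := by
  classical
  obtain ⟨D, hDc, hDd⟩ := TopologicalSpace.exists_countable_dense ℂ
  -- the open "hit" sets in H × H
  set W : ℂ → ℝ → ℕ → Set (H × H) := fun q s n =>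
    {p : H × H | ∃ z ∈ Metric.ball q s, ‖z • p.1 - p.2‖ < ‖p.1‖ / ((n : ℝ) + 1)} with hWdef
  have hWopen : ∀ q s n, IsOpen (W q s n) := by
    intro q s n
    have hrw : W q s n =
        ⋃ z ∈ Metric.ball q s, {p : H × H | ‖z • p.1 - p.2‖ < ‖p.1‖ / ((n : ℝ) + 1)} := by
      ext p; simp [hWdef]
    rw [hrw]
    refine isOpen_biUnion fun z _ => ?_
    exact isOpen_lt (by fun_prop) (by fun_prop)
  -- key set identity
  have key : {ω : Ω |
      ({z : ℂ | ∀ ε > 0, ∃ f : (T ω).domain,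
        ‖(f : H)‖ = 1 ∧ ‖z • (f : H) - T ω f‖ < ε} ∩ U).Nonempty}
      = ⋃ q ∈ D, ⋃ k : ℕ,
          ({ω : Ω | Metric.closedBall q (2 / ((k : ℝ) + 1)) ⊆ U} ∩
            ⋂ n : ℕ, {ω : Ω |
              (((T ω).graph : Set (H × H)) ∩ W q (1 / ((k : ℝ) + 1)) n).Nonempty}) := by
    ext ω
    simp only [Set.mem_setOf_eq, Set.mem_iUnion, Set.mem_inter_iff, Set.mem_iInter]
    constructor
    · rintro ⟨z, hzS, hzU⟩
      obtain ⟨δ, hδ, hball⟩ := Metric.isOpen_iff.mp hU z hzU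
      obtain ⟨k, hk⟩ := exists_nat_one_div_lt (show (0:ℝ) < δ / 3 by linarith)
      obtain ⟨q, hqD, hq⟩ := hDd.exists_dist_lt z (show (0:ℝ) < 1 / ((k : ℝ) + 1) by positivity)
      refine ⟨q, hqD, k, ?_, ?_⟩
      · intro w hw
        apply hball
        have hwq : dist w q ≤ 2 / ((k : ℝ) + 1) := Metric.mem_closedBall.mp hw
        have : dist w z ≤ dist w q + dist q z := dist_triangle w q z
        have hqz : dist q z < 1 / ((k : ℝ) + 1) := by rwa [dist_comm]
        have h3 : (3:ℝ) / ((k : ℝ) + 1) < δ := by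
          have : (3:ℝ) * (1 / ((k : ℝ) + 1)) < 3 * (δ/3) := by
            exact mul_lt_mul_of_pos_left hk (by norm_num)
          rw [mul_one_div] at this
          linarith
        rw [Metric.mem_ball]
        have : dist w z < 2 / ((k : ℝ) + 1) + 1 / ((k : ℝ) + 1) := by linarith
        calc dist w z < 2 / ((k : ℝ) + 1) + 1 / ((k : ℝ) + 1) := this
          _ = 3 / ((k : ℝ) + 1) := by ring
          _ < δ := h3
      · intro n
        obtain ⟨f, hf1, hf2⟩ := hzS (1 / ((n : ℝ) + 1)) (by positivity)
        refine ⟨((f : H), T ω f), (T ω).mem_graph f, z, Metric.mem_ball.mpr hq, ?_⟩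
        simpa [hf1] using hf2
    · rintro ⟨q, hqD, k, hsub, hhit⟩
      have H1 : ∀ n : ℕ, ∃ z ∈ Metric.ball q (1 / ((k : ℝ) + 1)),
          ∃ f : (T ω).domain, ‖(f : H)‖ = 1 ∧
            ‖z • (f : H) - T ω f‖ < 1 / ((n : ℝ) + 1) := by
        intro n
        obtain ⟨p, hpg, z, hzb, hlt⟩ := hhit n
        refine ⟨z, hzb, aux_scale (T ω) z (1 / ((n : ℝ) + 1)) p hpg ?_⟩
        rwa [mul_one_div]
      choose z hzb f hf1 hf2 using H1
      have hcpt : IsCompact (Metric.closedBall q (1 / ((k : ℝ) + 1))) :=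
        isCompact_closedBall q _
      obtain ⟨x, hxmem, φ, hφ, htend⟩ := hcpt.tendsto_subseq
        (fun n => Metric.ball_subset_closedBall (hzb n))
      have hxU : x ∈ U := by
        apply hsub
        rw [Metric.mem_closedBall] at hxmem ⊢
        have : (1:ℝ) / ((k : ℝ) + 1) ≤ 2 / ((k : ℝ) + 1) := by
          gcongr <;> norm_num
        linarith
      refine ⟨x, ?_, hxU⟩
      intro ε hε
      obtain ⟨m, hm⟩ := exists_nat_one_div_lt (show (0:ℝ) < ε / 2 by linarith)
      obtain ⟨N, hN⟩ := Metric.tendsto_atTop.mp htend (ε / 2) (by linarith)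
      set j := max N m with hj
      have hdist : dist (z (φ j)) x < ε / 2 := hN j (le_max_left _ _)
      have hmj : (1:ℝ) / ((φ j : ℝ) + 1) < ε / 2 := by
        have h1 : m ≤ φ j := le_trans (le_max_right N m) (hφ.le_apply)
        have : (1:ℝ) / ((φ j : ℝ) + 1) ≤ 1 / ((m : ℝ) + 1) := by
          gcongr <;> exact_mod_cast h1
        linarith
      refine ⟨f (φ j), hf1 (φ j), ?_⟩
      have hsplit : x • ((f (φ j) : H)) - T ω (f (φ j))
          = (x - z (φ j)) • ((f (φ j) : H)) + (z (φ j) • ((f (φ j) : H)) - T ω (f (φ j))) := by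
        rw [sub_smul]; abel
      rw [hsplit]
      calc ‖(x - z (φ j)) • ((f (φ j) : H)) + (z (φ j) • ((f (φ j) : H)) - T ω (f (φ j)))‖
          ≤ ‖(x - z (φ j)) • ((f (φ j) : H))‖ + ‖z (φ j) • ((f (φ j) : H)) - T ω (f (φ j))‖ :=
            norm_add_le _ _
        _ < ε / 2 + ε / 2 := by
            apply add_lt_add
            · rw [norm_smul, hf1 (φ j), mul_one, ← dist_eq_norm, dist_comm]
              exact hdist
            · exact lt_trans (hf2 (φ j)) hmj
        _ = ε := by ring
  rw [key]
  refine MeasurableSet.biUnion hDc fun q _ => MeasurableSet.iUnion fun k => ?_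
  refine MeasurableSet.inter ?_ (MeasurableSet.iInter fun n => hrandom _ (hWopen _ _ _))
  by_cases h : Metric.closedBall q (2 / ((k : ℝ) + 1)) ⊆ U <;> simp [h]
end

section
/- Let (Ω, 𝓔, μ) be a probability space, τ : Ω → Ω a measure-preserving ergodic transformation, X a second-countable metrizable (e.g. Polish) topological space, and F : Ω → Set X a random closed set, i.e. each F ω is closed and {ω | (F ω ∩ U).Nonempty} is measurable for every open U. Assume F is invariant: F (τ ω) = F ω for all ω ∈ Ω. Then there exists a closed set K ⊆ X such that F ω = K for μ-almost every ω. -/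
open MeasureTheory

/-- An invariant random closed set over an ergodic measure-preserving system is
almost surely equal to a fixed closed set. -/
theorem invariant_random_closed_set_ae_constant
    {Ω : Type*} [MeasurableSpace Ω] (μ : Measure Ω) [IsProbabilityMeasure μ]
    {τ : Ω → Ω} (hτ : Ergodic τ μ)
    {X : Type*} [TopologicalSpace X] [SecondCountableTopology X]
    [TopologicalSpace.MetrizableSpace X]
    (F : Ω → Set X)
    (hFclosed : ∀ ω, IsClosed (F ω))
    (hFmeas : ∀ U : Set X, IsOpen U → MeasurableSet {ω : Ω | (F ω ∩ U).Nonempty})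
    (hinv : ∀ ω, F (τ ω) = F ω) :
    ∃ K : Set X, IsClosed K ∧ ∀ᵐ ω ∂μ, F ω = K := by
  obtain ⟨b, hbc, -, hb⟩ := TopologicalSpace.exists_countable_basis X
  set A : Set X → Set Ω := fun U => {ω : Ω | (F ω ∩ U).Nonempty} with hA
  have hdich : ∀ U ∈ b, μ (A U) = 0 ∨ μ (A U) = 1 := by
    intro U hU
    refine hτ.prob_eq_zero_or_one (hFmeas U (hb.isOpen hU)) ?_
    ext ω
    simp [A, hinv ω]
  set K : Set X := (⋃₀ {U ∈ b | μ (A U) = 0})ᶜ with hK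
  have hKclosed : IsClosed K := by
    rw [hK]
    exact (isOpen_sUnion fun U hU => hb.isOpen hU.1).isClosed_compl
  refine ⟨K, hKclosed, ?_⟩
  have hae : ∀ᵐ ω ∂μ, ∀ U ∈ b, ((F ω ∩ U).Nonempty ↔ μ (A U) = 1) := by
    rw [ae_ball_iff hbc]
    intro U hU
    rcases hdich U hU with h0 | h1
    · have : ∀ᵐ ω ∂μ, ω ∉ A U := by
        rw [ae_iff]
        simpa using h0
      filter_upwards [this] with ω hω
      simp only [A, Set.mem_setOf_eq] at hω
      constructor
      · exact fun h => absurd h hω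
      · intro h; rw [h0] at h; exact absurd h (by norm_num)
    · have : ∀ᵐ ω ∂μ, ω ∈ A U := by
        rw [ae_iff]
        have := measure_compl (hFmeas U (hb.isOpen hU)) (measure_ne_top μ _)
        simp only [A] at *
        rw [show {ω | ω ∉ {ω : Ω | (F ω ∩ U).Nonempty}} =
            {ω : Ω | (F ω ∩ U).Nonempty}ᶜ from rfl, this, h1, measure_univ]
        simp
      filter_upwards [this] with ω hω
      exact ⟨fun _ => h1, fun _ => hω⟩
  filter_upwards [hae] with ω hω
  ext x
  constructor
  · intro hx
    simp only [hK, Set.mem_compl_iff, Set.mem_sUnion, not_exists]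
    rintro U ⟨⟨hUb, hU0⟩, hxU⟩
    have : μ (A U) = 1 := (hω U hUb).1 ⟨x, hx, hxU⟩
    rw [hU0] at this
    exact absurd this (by norm_num)
  · intro hx
    by_contra hxF
    obtain ⟨U, hUb, hxU, hUsub⟩ :=
      hb.exists_subset_of_mem_open (by exact hxF) (hFclosed ω).isOpen_compl
    have hempty : ¬(F ω ∩ U).Nonempty := by
      rintro ⟨y, hyF, hyU⟩
      exact hUsub hyU hyF
    have h0 : μ (A U) = 0 := by
      rcases hdich U hUb with h | h
      · exact h
      · exact absurd ((hω U hUb).2 h) hempty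
    exact hx (Set.mem_sUnion.2 ⟨U, ⟨hUb, h0⟩, hxU⟩)
end

section
/- Let (Ω, 𝓔) be a measurable space, H a separable complex Hilbert space, and T : Ω → (H →ₗ.[ℂ] H) a map into partially defined linear operators with closed graphs. Let fₙ, gₙ : Ω → H be measurable maps such that for every ω and every n the pair (fₙ ω, gₙ ω) lies in the graph of T ω, and {(fₙ ω, gₙ ω) | n ∈ ℕ} is dense in the graph of T ω. Then the set {(ω, z) ∈ Ω × ℂ | z ∈ σ_ap(T ω)}, where σ_ap(T ω) = {z | ∀ ε > 0, ∃ f ∈ dom(T ω), ‖f‖ = 1 ∧ ‖z • f − T ω f‖ < ε}, equals ⋂_{N ≥ 1} ⋃_{n} {(ω, z) | ‖z • fₙ ω − gₙ ω‖ < ‖fₙ ω‖ / N} and is measurable with respect to the product σ-algebra 𝓔 ⊗ Borel(ℂ). -/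
/-- Given a random closed operator `T` with a dense measurable selection
`(fₙ, gₙ)` of its graph, the set `{(ω, z) | z ∈ σ_ap (T ω)}` equals
`⋂_{N ≥ 1} ⋃_n {(ω, z) | ‖z • fₙ ω - gₙ ω‖ < ‖fₙ ω‖ / N}` and is measurable
for the product σ-algebra on `Ω × ℂ`. -/
theorem approximate_point_spectrum_graph_measurable
    {Ω : Type*} [MeasurableSpace Ω]
    {H : Type*} [NormedAddCommGroup H] [InnerProductSpace ℂ H] [CompleteSpace H]
    [SecondCountableTopology H] [MeasurableSpace H] [BorelSpace H]
    (T : Ω → (H →ₗ.[ℂ] H))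
    (hclosed : ∀ ω, IsClosed ((T ω).graph : Set (H × H)))
    (f g : ℕ → Ω → H)
    (hfmeas : ∀ n, Measurable (f n)) (hgmeas : ∀ n, Measurable (g n))
    (hmem : ∀ ω n, (f n ω, g n ω) ∈ (T ω).graph)
    (hdense : ∀ ω, ((T ω).graph : Set (H × H)) ⊆
      closure (Set.range fun n => (f n ω, g n ω))) :
    {p : Ω × ℂ | ∀ ε > 0, ∃ v : (T p.1).domain,
        ‖(v : H)‖ = 1 ∧ ‖p.2 • (v : H) - T p.1 v‖ < ε} =
      (⋂ N ∈ {N : ℕ | 1 ≤ N}, ⋃ n : ℕ,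
        {p : Ω × ℂ | ‖p.2 • f n p.1 - g n p.1‖ < ‖f n p.1‖ / N}) ∧
    MeasurableSet {p : Ω × ℂ | ∀ ε > 0, ∃ v : (T p.1).domain,
        ‖(v : H)‖ = 1 ∧ ‖p.2 • (v : H) - T p.1 v‖ < ε} := by
  have heq : {p : Ω × ℂ | ∀ ε > 0, ∃ v : (T p.1).domain,
        ‖(v : H)‖ = 1 ∧ ‖p.2 • (v : H) - T p.1 v‖ < ε} =
      (⋂ N ∈ {N : ℕ | 1 ≤ N}, ⋃ n : ℕ,
        {p : Ω × ℂ | ‖p.2 • f n p.1 - g n p.1‖ < ‖f n p.1‖ / N}) := by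
    ext ⟨ω, z⟩
    simp only [Set.mem_setOf_eq, Set.mem_iInter, Set.mem_iUnion]
    constructor
    · intro h N hN
      have hNpos : (0:ℝ) < N := by exact_mod_cast hN
      obtain ⟨v, hv1, hv2⟩ := h (1/(4*N)) (by positivity)
      -- approximate (v, T v) by (f n, g n)
      have hgraph : ((v : H), T ω v) ∈ ((T ω).graph : Set (H × H)) :=
        (T ω).mem_graph v
      have hcl := hdense ω hgraph
      set δ : ℝ := min (1/2) (1/(4*N*(‖z‖+1))) with hδdef
      have hδpos : 0 < δ := by
        apply lt_min (by norm_num)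
        positivity
      obtain ⟨b, hb, hbd⟩ := Metric.mem_closure_iff.mp hcl δ hδpos
      obtain ⟨n, rfl⟩ := hb
      refine ⟨n, ?_⟩
      show ‖z • f n ω - g n ω‖ < ‖f n ω‖ / N
      rw [Prod.dist_eq] at hbd
      have hd1 : dist (v : H) (f n ω) < δ := (le_max_left _ _).trans_lt hbd
      have hd2 : dist (T ω v) (g n ω) < δ := (le_max_right _ _).trans_lt hbd
      rw [dist_eq_norm] at hd1 hd2
      have hδhalf : δ ≤ 1/2 := min_le_left _ _
      have hδ2 : δ ≤ 1/(4*N*(‖z‖+1)) := min_le_right _ _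
      have hfnorm : 1 - δ < ‖f n ω‖ := by
        have := norm_sub_norm_le (v : H) (f n ω)
        rw [hv1] at this; linarith
      have hkey : ‖z • f n ω - g n ω‖ < 1/(2*N) := by
        have hsplit : ‖z • f n ω - g n ω‖ ≤
            ‖z • (v:H) - T ω v‖ + ‖z‖ * ‖(v:H) - f n ω‖ + ‖T ω v - g n ω‖ := by
          have : z • f n ω - g n ω =
              (z • (v:H) - T ω v) - z • ((v:H) - f n ω) + (T ω v - g n ω) := by
            simp only [smul_sub]; abel
          rw [this]
          calc _ ≤ ‖(z • (v:H) - T ω v) - z • ((v:H) - f n ω)‖ + ‖T ω v - g n ω‖ :=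
                norm_add_le _ _
            _ ≤ ‖z • (v:H) - T ω v‖ + ‖z • ((v:H) - f n ω)‖ + ‖T ω v - g n ω‖ := by
                gcongr; exact norm_sub_le _ _
            _ = _ := by rw [norm_smul]
        have hz : (0:ℝ) ≤ ‖z‖ := norm_nonneg _
        have h1 : ‖z‖ * ‖(v:H) - f n ω‖ + ‖T ω v - g n ω‖ ≤ (‖z‖+1) * δ := by
          nlinarith [norm_nonneg ((v:H) - f n ω)]
        have h2 : (‖z‖+1) * δ ≤ 1/(4*N) := by
          have h3 : (0:ℝ) < ‖z‖+1 := by linarith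
          rw [div_mul_eq_div_div] at hδ2
          calc (‖z‖+1) * δ ≤ (‖z‖+1) * (1/(4*N)/(‖z‖+1)) := by gcongr
            _ = 1/(4*N) := by field_simp
        have heqN : 1/(4*(N:ℝ)) + 1/(4*N) = 1/(2*N) := by ring
        linarith
      calc ‖z • f n ω - g n ω‖ < 1/(2*N) := hkey
        _ ≤ (1-δ)/N := by rw [div_le_div_iff₀ (by positivity) hNpos]; nlinarith
        _ < ‖f n ω‖/N := by gcongr
    · intro h ε hε
      obtain ⟨m, hm⟩ := exists_nat_one_div_lt hε
      obtain ⟨n, hn⟩ := h (m+1) (Nat.le_add_left 1 m)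
      have hNpos : (0:ℝ) < ((m:ℝ)+1) := by positivity
      have hfpos : 0 < ‖f n ω‖ := by
        by_contra hc
        push_neg at hc
        have : ‖f n ω‖ = 0 := le_antisymm hc (norm_nonneg _)
        rw [this, zero_div] at hn
        exact absurd hn (not_lt.mpr (norm_nonneg _))
      obtain ⟨y, hy1, hy2⟩ := (T ω).mem_graph_iff.mp (hmem ω n)
      refine ⟨((‖f n ω‖⁻¹ : ℝ) : ℂ) • y, ?_, ?_⟩
      · push_cast [Submodule.coe_smul, norm_smul, hy1]
        rw [norm_inv, Complex.norm_real, Real.norm_eq_abs, abs_of_pos hfpos]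
        field_simp
      · rw [(T ω).map_smul]
        push_cast [Submodule.coe_smul, hy1, hy2]
        rw [smul_comm z, ← smul_sub, norm_smul, norm_inv, Complex.norm_real,
          Real.norm_eq_abs, abs_of_pos hfpos]
        have : ‖f n ω‖⁻¹ * ‖z • f n ω - g n ω‖ < ‖f n ω‖⁻¹ * (‖f n ω‖ / ((m:ℝ)+1)) := by
          gcongr
          exact_mod_cast hn
        calc ‖f n ω‖⁻¹ * ‖z • f n ω - g n ω‖ < ‖f n ω‖⁻¹ * (‖f n ω‖ / ((m:ℝ)+1)) := this
          _ = 1/((m:ℝ)+1) := by field_simp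
          _ < ε := hm
  refine ⟨heq, ?_⟩
  rw [heq]
  refine MeasurableSet.biInter (Set.to_countable _) fun N _ => MeasurableSet.iUnion fun n => ?_
  have h1 : Measurable fun p : Ω × ℂ => ‖p.2 • f n p.1 - g n p.1‖ := by
    apply Measurable.norm
    apply Measurable.sub
    · exact measurable_snd.smul ((hfmeas n).comp measurable_fst)
    · exact (hgmeas n).comp measurable_fst
  have h2 : Measurable fun p : Ω × ℂ => ‖f n p.1‖ / (N:ℝ) :=
    (((hfmeas n).comp measurable_fst).norm).div measurable_const
  exact measurableSet_lt h1 h2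
end

section
/- Let (Ω, 𝓔) be a measurable space, H a separable complex Hilbert space, and X : Ω → Submodule ℂ H a map such that each X ω is a closed (hence complete) subspace of H. Let P ω denote the orthogonal projection of H onto X ω. Then the following are equivalent: (1) for every f ∈ H the map ω ↦ P ω f is measurable; (2) X is a random closed subspace, i.e. {ω | ((X ω : Set H) ∩ U).Nonempty} is measurable for every open U ⊆ H. -/
/-!
The hit sets of a map `S` with nonempty values are measurable exactly when every distance function
`ω ↦ infDist y (S ω)` is: `infDist y (S ω) < r` says that `S ω` hits `ball y r`, and in a separable
space an open set is a countable union of balls. As `P ω y` is the point of `X ω` nearest to `y`,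
that distance is `‖y - P ω y‖`, which gives one direction. Conversely, `P ω f - g` is the sum of
`P ω (f - g) ∈ X ω` and `P ω g - g ⊥ X ω`, so Pythagoras gives
`‖P ω f - g‖² = ‖f - g‖² - infDist (f - g) (X ω)² + infDist g (X ω)²`. Hence `ω ↦ dist (P ω f) g`
is measurable for every `g`, which suffices for measurability into a separable metric space.
-/

open Metric Set TopologicalSpace

theorem IsOpen.eq_biUnion_ball_of_dense {E : Type*} [PseudoMetricSpace E] {s : Set E} (hs : Dense s)
    {U : Set E} (hU : IsOpen U) :
    U = ⋃ y ∈ s, ⋃ (r : ℚ) (_ : ball y r ⊆ U), ball y r := by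
  refine Subset.antisymm (fun x hx => ?_) (by simp only [iUnion_subset_iff]; exact fun _ _ _ h => h)
  obtain ⟨ε, hε, hball⟩ := Metric.isOpen_iff.1 hU x hx
  obtain ⟨y, hys, hy⟩ := hs.exists_dist_lt x (by positivity : (0 : ℝ) < ε / 2)
  obtain ⟨r, hyr, hrε⟩ := exists_rat_btwn hy
  simp only [mem_iUnion, exists_prop]
  refine ⟨y, hys, r, fun z hz => hball ?_, mem_ball.2 hyr⟩
  rw [mem_ball] at hz ⊢
  linarith [dist_triangle z y x, dist_comm x y]

section Measurability

variable {Ω E : Type*} [MeasurableSpace Ω] [PseudoMetricSpace E] [SeparableSpace E]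

theorem measurable_of_measurable_dist [MeasurableSpace E] [BorelSpace E] {F : Ω → E}
    (hF : ∀ y, Measurable fun ω => dist (F ω) y) : Measurable F := by
  obtain ⟨s, hsc, hsd⟩ := exists_countable_dense E
  refine measurable_of_isOpen fun U hU => ?_
  rw [hU.eq_biUnion_ball_of_dense hsd]
  simp only [preimage_iUnion]
  exact .biUnion hsc fun y _ => .iUnion fun r => .iUnion fun _ =>
    measurableSet_lt (hF y) measurable_const

theorem measurableSet_hit_iff_measurable_infDist {S : Ω → Set E} (hS : ∀ ω, (S ω).Nonempty) :
    (∀ U : Set E, IsOpen U → MeasurableSet {ω | (S ω ∩ U).Nonempty}) ↔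
      ∀ y, Measurable fun ω => infDist y (S ω) := by
  have hlt : ∀ y (r : ℝ), {ω | infDist y (S ω) < r} = {ω | (S ω ∩ ball y r).Nonempty} := by
    intro y r
    ext ω
    simp only [mem_ofPred_eq, infDist_lt_iff (hS ω), mem_ball, dist_comm y, Set.Nonempty,
      mem_inter_iff]
  constructor
  · intro hhit y
    exact measurable_of_Iio fun r => by
      simpa only [preimage, mem_Iio, hlt] using hhit _ isOpen_ball
  · intro hd U hU
    obtain ⟨s, hsc, hsd⟩ := exists_countable_dense E
    have hcover : {ω | (S ω ∩ U).Nonempty} =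
        ⋃ y ∈ s, ⋃ (r : ℚ) (_ : ball y r ⊆ U), {ω | infDist y (S ω) < r} := by
      ext ω
      simp only [hlt, mem_iUnion, mem_ofPred_eq, exists_prop]
      conv_lhs => rw [hU.eq_biUnion_ball_of_dense hsd]
      simp only [inter_iUnion, nonempty_iUnion, exists_prop]
    rw [hcover]
    exact .biUnion hsc fun y _ => .iUnion fun r => .iUnion fun _ =>
      measurableSet_lt (hd y) measurable_const

end Measurability

section NearestPoint

variable {𝕜 E : Type*} [RCLike 𝕜] [NormedAddCommGroup E] [InnerProductSpace 𝕜 E]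
  {K : Submodule 𝕜 E} {u v : E}

theorem Submodule.inner_sub_eq_zero_of_forall_norm_sub_le (hv : v ∈ K)
    (hmin : ∀ w ∈ K, ‖u - v‖ ≤ ‖u - w‖) : ∀ w ∈ K, inner 𝕜 (u - v) w = 0 :=
  (norm_eq_iInf_iff_inner_eq_zero K hv).1 <| le_antisymm (le_ciInf fun w => hmin w w.2)
    (ciInf_le (f := fun w : K => ‖u - w‖) ⟨0, by rintro _ ⟨w, rfl⟩; positivity⟩ ⟨v, hv⟩)

theorem Submodule.infDist_eq_norm_sub_of_forall_norm_sub_le (hv : v ∈ K)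
    (hmin : ∀ w ∈ K, ‖u - v‖ ≤ ‖u - w‖) : infDist u K = ‖u - v‖ :=
  le_antisymm (by simpa only [dist_eq_norm] using infDist_le_dist_of_mem (x := u) hv)
    ((le_infDist ⟨v, hv⟩).2 fun w hw => by simpa only [dist_eq_norm] using hmin w hw)

theorem Submodule.norm_map_sub_sq_eq_of_forall_norm_sub_le (T : E →ₗ[𝕜] E)
    (hT : ∀ f, T f ∈ K ∧ ∀ g ∈ K, ‖f - T f‖ ≤ ‖f - g‖) (f g : E) :
    ‖T f - g‖ ^ 2 = ‖f - g‖ ^ 2 - infDist (f - g) K ^ 2 + infDist g K ^ 2 := by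
  have horth : ∀ h, ∀ w ∈ K, inner 𝕜 w (h - T h) = 0 := fun h w hw =>
    inner_eq_zero_symm.1 (inner_sub_eq_zero_of_forall_norm_sub_le (hT h).1 (hT h).2 w hw)
  have hdist : ∀ h, infDist h K = ‖h - T h‖ := fun h =>
    infDist_eq_norm_sub_of_forall_norm_sub_le (hT h).1 (hT h).2
  have hf : ‖f - g‖ ^ 2 = ‖T (f - g)‖ ^ 2 + ‖f - g - T (f - g)‖ ^ 2 := by
    simpa only [add_sub_cancel, sq] using norm_add_sq_eq_norm_sq_add_norm_sq_of_inner_eq_zero _ _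
      (horth (f - g) _ (hT (f - g)).1)
  have hTf : ‖T f - g‖ ^ 2 = ‖T (f - g)‖ ^ 2 + ‖g - T g‖ ^ 2 := by
    have := norm_add_sq_eq_norm_sq_add_norm_sq_of_inner_eq_zero _ _
      ((inner_neg_right _ _).trans (neg_eq_zero.2 (horth g _ (hT (f - g)).1)))
    simpa only [norm_neg, map_sub, sq, ← sub_eq_add_neg, sub_sub_sub_cancel_right] using this
  rw [hdist, hdist, hTf, hf]
  ring

end NearestPoint

theorem random_closed_subspace_iff_projection_measurable_general
    {Ω : Type*} [MeasurableSpace Ω]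
    {H : Type*} [NormedAddCommGroup H] [InnerProductSpace ℂ H]
    [SecondCountableTopology H] [MeasurableSpace H] [BorelSpace H]
    (X : Ω → Submodule ℂ H)
    (P : Ω → (H →L[ℂ] H))
    (hP : ∀ ω (f : H), P ω f ∈ X ω ∧ ∀ g ∈ X ω, ‖f - P ω f‖ ≤ ‖f - g‖) :
    (∀ f : H, Measurable fun ω => P ω f) ↔
      (∀ U : Set H, IsOpen U →
        MeasurableSet {ω : Ω | ((X ω : Set H) ∩ U).Nonempty}) := by
  rw [measurableSet_hit_iff_measurable_infDist fun ω => ⟨0, (X ω).zero_mem⟩]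
  have hdist : ∀ ω f, infDist f (X ω) = ‖f - P ω f‖ := fun ω f =>
    Submodule.infDist_eq_norm_sub_of_forall_norm_sub_le (hP ω f).1 (hP ω f).2
  constructor
  · intro hP_meas f
    simpa only [hdist] using
      (show Measurable fun ω => f - P ω f from measurable_const.sub (hP_meas f)).norm
  · intro hd f
    refine measurable_of_measurable_dist fun g => ?_
    have hsq : ∀ ω, dist (P ω f) g =
        √(‖f - g‖ ^ 2 - infDist (f - g) (X ω) ^ 2 + infDist g (X ω) ^ 2) := fun ω => by
      rw [dist_eq_norm, ← Submodule.norm_map_sub_sq_eq_of_forall_norm_sub_le (P ω).toLinearMap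
        (hP ω) f g, Real.sqrt_sq (norm_nonneg _), ContinuousLinearMap.coe_coe]
    simp only [hsq]
    exact ((measurable_const.sub ((hd _).pow_const 2)).add ((hd g).pow_const 2)).sqrt

/-- A family of closed subspaces `X ω` of a separable complex Hilbert space is
a random closed subspace iff the orthogonal projections `P ω` (characterised as
nearest-point maps onto `X ω`) are measurable applied to every fixed vector. -/
theorem random_closed_subspace_iff_projection_measurable
    {Ω : Type*} [MeasurableSpace Ω]
    {H : Type*} [NormedAddCommGroup H] [InnerProductSpace ℂ H] [CompleteSpace H]
    [SecondCountableTopology H] [MeasurableSpace H] [BorelSpace H]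
    (X : Ω → Submodule ℂ H) (hXclosed : ∀ ω, IsClosed ((X ω : Set H)))
    (P : Ω → (H →L[ℂ] H))
    (hP : ∀ ω (f : H), P ω f ∈ X ω ∧ ∀ g ∈ X ω, ‖f - P ω f‖ ≤ ‖f - g‖) :
    (∀ f : H, Measurable fun ω => P ω f) ↔
      (∀ U : Set H, IsOpen U →
        MeasurableSet {ω : Ω | ((X ω : Set H) ∩ U).Nonempty}) :=
  random_closed_subspace_iff_projection_measurable_general X P hP
end

section
/- Let (Ω, 𝓔) be a measurable space, H a separable complex Hilbert space, and T : Ω → (H →ₗ.[ℂ] H) a random closed operator such that each T ω is densely defined. Then the adjoint map ω ↦ (T ω)† is a random closed operator: each graph of (T ω)† is a closed subspace of H × H, and {ω | ((graph of (T ω)† : Set (H × H)) ∩ V).Nonempty} is measurable for every open V ⊆ H × H. -/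
/-! The graph of `T†` is the image, under `(x, y) ↦ (y, -x)` and the identification of `H × H`
with its ℓ² product, of the orthogonal complement of the graph of `T`; so it suffices that
orthogonal complements of an Effros measurable family of subspaces `K ω` are Effros measurable.
The complement `(K ω)ᗮ` meets the ball `B(q, r)` iff `‖P_ω q‖ < r`, where `P_ω` projects onto the
closure of `K ω`, and `s < ‖P_ω q‖` iff `K ω` meets the open set `{w | ‖w‖ < 1 ∧ s < ‖⟪q, w⟫‖}`;
thus `ω ↦ ‖P_ω q‖` is measurable. Open sets of a separable space are countable unions of balls. -/

open Set Metric
open scoped InnerProductSpace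

def EffrosMeasurable {Ω X : Type*} [MeasurableSpace Ω] [TopologicalSpace X] (F : Ω → Set X) :
    Prop :=
  ∀ U : Set X, IsOpen U → MeasurableSet {ω | (F ω ∩ U).Nonempty}

namespace EffrosMeasurable

variable {Ω X Y : Type*} [MeasurableSpace Ω] {F : Ω → Set X}

lemma image [TopologicalSpace X] [TopologicalSpace Y] (hF : EffrosMeasurable F) {f : X → Y}
    (hf : Continuous f) : EffrosMeasurable fun ω => f '' F ω := fun U hU => by
  simpa only [image_inter_nonempty_iff] using hF _ (hU.preimage hf)

lemma closure [TopologicalSpace X] (hF : EffrosMeasurable F) :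
    EffrosMeasurable fun ω => closure (F ω) := fun U hU => by
  simpa only [closure_inter_open_nonempty_iff hU] using hF U hU

lemma of_ball [PseudoMetricSpace X] [SecondCountableTopology X]
    (hF : ∀ x r, MeasurableSet {ω | (F ω ∩ ball x r).Nonempty}) : EffrosMeasurable F := by
  intro U hU
  let B : {p : X × ℝ // ball p.1 p.2 ⊆ U} → Set X := fun b => ball b.1.1 b.1.2
  obtain ⟨S, hS, hSU⟩ := TopologicalSpace.isOpen_iUnion_countable B fun _ => isOpen_ball
  have hU_eq : U = ⋃ b, B b := by
    refine Subset.antisymm (fun x hx => ?_) (iUnion_subset fun b => b.2)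
    obtain ⟨ε, hε, hεU⟩ := Metric.isOpen_iff.1 hU x hx
    exact mem_iUnion.2 ⟨⟨(x, ε), hεU⟩, mem_ball_self hε⟩
  rw [hU_eq, ← hSU]
  simp only [inter_iUnion₂, nonempty_iUnion, ofPred_exists]
  exact .biUnion hS fun b _ => hF _ _

end EffrosMeasurable

section Orthogonal

variable {𝕜 E : Type*} [RCLike 𝕜] [NormedAddCommGroup E] [InnerProductSpace 𝕜 E]

namespace Submodule

variable (K : Submodule 𝕜 E) [K.HasOrthogonalProjection]

lemma orthogonal_inter_ball_nonempty_iff (q : E) (r : ℝ) :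
    ((Kᗮ : Set E) ∩ ball q r).Nonempty ↔ ‖K.starProjection q‖ < r := by
  constructor
  · rintro ⟨p, hp, hpq⟩
    calc ‖K.starProjection q‖ = ‖K.starProjection (q - p)‖ := by
          rw [map_sub, K.starProjection_apply_eq_zero_iff.2 hp, sub_zero]
      _ ≤ ‖q - p‖ := K.norm_starProjection_apply_le _
      _ < r := by rwa [← dist_eq_norm, dist_comm]
  · intro h
    exact ⟨_, K.sub_starProjection_mem_orthogonal q, by simpa [dist_eq_norm] using h⟩

lemma lt_norm_starProjection_iff (q : E) (s : ℝ) :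
    s < ‖K.starProjection q‖ ↔ ∃ w ∈ K, ‖w‖ < 1 ∧ s < ‖⟪q, w⟫_𝕜‖ := by
  have inner_eq : ∀ w ∈ K, ⟪q, w⟫_𝕜 = ⟪K.starProjection q, w⟫_𝕜 := fun w hw => by
    rw [K.inner_starProjection_left_eq_right, K.starProjection_eq_self_iff.2 hw]
  constructor
  · intro hs
    set p := K.starProjection q
    rcases lt_or_ge s 0 with hs0 | hs0
    · exact ⟨0, K.zero_mem, by simp, by simpa using hs0⟩
    have hp : 0 < ‖p‖ := hs0.trans_lt hs
    obtain ⟨c, hsc, hc1⟩ := exists_between ((div_lt_one hp).2 hs)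
    have hc : 0 < c := (div_nonneg hs0 hp.le).trans_lt hsc
    refine ⟨((c / ‖p‖ : ℝ) : 𝕜) • p, K.smul_mem _ (K.starProjection_apply_mem q), ?_, ?_⟩
    · rw [norm_smul, RCLike.norm_ofReal, abs_of_pos (by positivity), div_mul_cancel₀ _ hp.ne']
      exact hc1
    · rw [inner_eq _ (K.smul_mem _ (K.starProjection_apply_mem q)), inner_smul_right,
        inner_self_eq_norm_sq_to_K, norm_mul, RCLike.norm_ofReal, norm_pow, RCLike.norm_ofReal,
        abs_norm, abs_of_pos (by positivity)]
      rw [div_lt_iff₀ hp] at hsc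
      calc s < c * ‖p‖ := hsc
        _ = c / ‖p‖ * ‖p‖ ^ 2 := by field_simp
  · rintro ⟨w, hw, hw1, hsw⟩
    calc s < ‖⟪K.starProjection q, w⟫_𝕜‖ := inner_eq w hw ▸ hsw
      _ ≤ ‖K.starProjection q‖ * ‖w‖ := norm_inner_le_norm _ _
      _ ≤ ‖K.starProjection q‖ := mul_le_of_le_one_right (norm_nonneg _) hw1.le

end Submodule

variable {Ω : Type*} [MeasurableSpace Ω] {K : Ω → Submodule 𝕜 E}

lemma EffrosMeasurable.measurable_norm_starProjection [∀ ω, (K ω).HasOrthogonalProjection]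
    (hK : EffrosMeasurable fun ω => (K ω : Set E)) (q : E) :
    Measurable fun ω => ‖(K ω).starProjection q‖ := by
  refine measurable_of_Ioi fun s => ?_
  have hopen : IsOpen {w : E | ‖w‖ < 1 ∧ s < ‖⟪q, w⟫_𝕜‖} :=
    (isOpen_lt continuous_norm continuous_const).inter
      (isOpen_lt continuous_const (continuous_norm.comp (innerSL 𝕜 q).continuous))
  convert hK _ hopen using 1
  ext ω
  exact (K ω).lt_norm_starProjection_iff q s

lemma EffrosMeasurable.orthogonal [CompleteSpace E] [SecondCountableTopology E]
    (hK : EffrosMeasurable fun ω => (K ω : Set E)) :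
    EffrosMeasurable fun ω => ((K ω)ᗮ : Set E) := by
  have hK' : EffrosMeasurable fun ω => ((K ω).topologicalClosure : Set E) := by
    simpa only [Submodule.topologicalClosure_coe] using hK.closure
  have h_closure : (fun ω => ((K ω)ᗮ : Set E)) = fun ω => ((K ω).topologicalClosureᗮ : Set E) :=
    funext fun ω => by rw [Submodule.orthogonal_closure]
  rw [h_closure]
  refine of_ball fun q r => ?_
  simp_rw [Submodule.orthogonal_inter_ball_nonempty_iff]
  exact measurableSet_lt (hK'.measurable_norm_starProjection q) measurable_const

end Orthogonal

lemma EffrosMeasurable.adjoint {𝕜 E F Ω : Type*} [RCLike 𝕜] [MeasurableSpace Ω]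
    [NormedAddCommGroup E] [InnerProductSpace 𝕜 E] [CompleteSpace E] [SecondCountableTopology E]
    [NormedAddCommGroup F] [InnerProductSpace 𝕜 F] [CompleteSpace F] [SecondCountableTopology F]
    {g : Ω → Submodule 𝕜 (E × F)} (hg : EffrosMeasurable fun ω => (g ω : Set (E × F))) :
    EffrosMeasurable fun ω => ((g ω).adjoint : Set (F × E)) := by
  have h_skew : Continuous ((LinearEquiv.skewSwap 𝕜 F E).symm.trans
      (WithLp.linearEquiv 2 𝕜 (F × E)).symm) :=
    (WithLp.prod_continuous_toLp 2 F E).comp (continuous_snd.prodMk continuous_fst.neg)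
  exact ((hg.image h_skew).orthogonal).image (WithLp.prod_continuous_ofLp 2 F E)

theorem adjoint_of_random_closed_operator_is_random_general
    {Ω : Type*} [MeasurableSpace Ω]
    {H : Type*} [NormedAddCommGroup H] [InnerProductSpace ℂ H] [CompleteSpace H]
    [SecondCountableTopology H]
    (T : Ω → (H →ₗ.[ℂ] H))
    (hdense : ∀ ω, Dense (((T ω).domain : Set H)))
    (hrandom : ∀ V : Set (H × H), IsOpen V →
      MeasurableSet {ω : Ω | (((T ω).graph : Set (H × H)) ∩ V).Nonempty}) :
    (∀ ω, IsClosed (((T ω).adjoint.graph : Set (H × H)))) ∧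
    (∀ V : Set (H × H), IsOpen V →
      MeasurableSet {ω : Ω | (((T ω).adjoint.graph : Set (H × H)) ∩ V).Nonempty}) := by
  refine ⟨fun ω => LinearPMap.adjoint_isClosed (hdense ω), fun V hV => ?_⟩
  simp only [LinearPMap.adjoint_graph_eq_graph_adjoint (hdense _)]
  exact EffrosMeasurable.adjoint (g := fun ω => (T ω).graph) hrandom V hV

/-- The adjoint of a (densely defined) random closed operator is a random
closed operator: each adjoint graph is closed, and the hit sets of the adjoint
graphs by open subsets of `H × H` are measurable. -/
theorem adjoint_of_random_closed_operator_is_random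
    {Ω : Type*} [MeasurableSpace Ω]
    {H : Type*} [NormedAddCommGroup H] [InnerProductSpace ℂ H] [CompleteSpace H]
    [SecondCountableTopology H]
    (T : Ω → (H →ₗ.[ℂ] H))
    (hclosed : ∀ ω, IsClosed ((T ω).graph : Set (H × H)))
    (hdense : ∀ ω, Dense (((T ω).domain : Set H)))
    (hrandom : ∀ V : Set (H × H), IsOpen V →
      MeasurableSet {ω : Ω | (((T ω).graph : Set (H × H)) ∩ V).Nonempty}) :
    (∀ ω, IsClosed (((T ω).adjoint.graph : Set (H × H)))) ∧
    (∀ V : Set (H × H), IsOpen V →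
      MeasurableSet {ω : Ω | (((T ω).adjoint.graph : Set (H × H)) ∩ V).Nonempty}) :=
  adjoint_of_random_closed_operator_is_random_general T hdense hrandom
end

section
/- Let (Ω, 𝓔) be a measurable space, H a separable complex Hilbert space, and T : Ω → (H →ₗ.[ℂ] H) a random closed operator. Then both the domain map ω ↦ dom(T ω) and the range map ω ↦ range(T ω) are random sets: for every open U ⊆ H, the sets {ω | (dom(T ω) ∩ U).Nonempty} and {ω | (range(T ω) ∩ U).Nonempty} are measurable. -/
/-- The domain and the range of a random closed operator are random sets. -/
theorem domain_and_range_of_random_closed_operator_are_random_sets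
    {Ω : Type*} [MeasurableSpace Ω]
    {H : Type*} [NormedAddCommGroup H] [InnerProductSpace ℂ H] [CompleteSpace H]
    [SecondCountableTopology H]
    (T : Ω → (H →ₗ.[ℂ] H))
    (hclosed : ∀ ω, IsClosed ((T ω).graph : Set (H × H)))
    (hrandom : ∀ V : Set (H × H), IsOpen V →
      MeasurableSet {ω : Ω | (((T ω).graph : Set (H × H)) ∩ V).Nonempty}) :
    (∀ U : Set H, IsOpen U →
      MeasurableSet {ω : Ω | (((T ω).domain : Set H) ∩ U).Nonempty}) ∧
    (∀ U : Set H, IsOpen U →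
      MeasurableSet {ω : Ω | (Set.range (fun x : (T ω).domain => T ω x) ∩ U).Nonempty}) := by
  constructor
  · intro U hU
    have h : {ω : Ω | (((T ω).domain : Set H) ∩ U).Nonempty}
        = {ω : Ω | (((T ω).graph : Set (H × H)) ∩ (U ×ˢ Set.univ)).Nonempty} := by
      ext ω
      simp only [Set.mem_setOf_eq]
      constructor
      · rintro ⟨x, hx, hxU⟩
        exact ⟨(x, T ω ⟨x, hx⟩), (T ω).mem_graph ⟨x, hx⟩, ⟨hxU, trivial⟩⟩
      · rintro ⟨⟨x, y⟩, hg, hxU, -⟩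
        rcases (LinearPMap.mem_graph_iff _).mp hg with ⟨z, hz1, -⟩
        exact ⟨x, by have : (z : H) = x := hz1; rw [← this]; exact z.2, hxU⟩
    rw [h]
    exact hrandom _ (hU.prod isOpen_univ)
  · intro U hU
    have h : {ω : Ω | (Set.range (fun x : (T ω).domain => T ω x) ∩ U).Nonempty}
        = {ω : Ω | (((T ω).graph : Set (H × H)) ∩ (Set.univ ×ˢ U)).Nonempty} := by
      ext ω
      simp only [Set.mem_setOf_eq]
      constructor
      · rintro ⟨y, ⟨x, rfl⟩, hyU⟩
        exact ⟨(x, T ω x), (T ω).mem_graph x, ⟨trivial, hyU⟩⟩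
      · rintro ⟨⟨x, y⟩, hg, -, hyU⟩
        rcases (LinearPMap.mem_graph_iff _).mp hg with ⟨z, -, hz2⟩
        exact ⟨y, ⟨z, hz2⟩, hyU⟩
    rw [h]
    exact hrandom _ (isOpen_univ.prod hU)
end

section
/- Let (Ω, 𝓔) be a measurable space, H a separable complex Hilbert space, and T : Ω → (H →ₗ.[ℂ] H) a random closed operator. Then every T ω is bounded (i.e. there exists C ω with ‖T ω f‖ ≤ C ω • ‖f‖ for all f ∈ dom(T ω)) if and only if every domain dom(T ω) is a closed subspace of H; and in that case the domain map ω ↦ dom(T ω) is a random closed subspace, i.e. {ω | (dom(T ω) ∩ U).Nonempty} is measurable for every open U ⊆ H and each dom(T ω) is closed. -/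
/-!
For a closed operator between Banach spaces, a closed domain is itself a Banach space, so the
closed graph theorem makes the operator continuous; conversely, a continuous operator maps its
domain uniformly homeomorphically onto its graph, which is complete, so the domain is complete and
hence closed. Measurability of the domain map follows because the domain is the projection of the
graph: it meets `U` exactly when the graph meets the open set `U × H`.
-/

namespace LinearPMap

variable {𝕜 E F : Type*} [NontriviallyNormedField 𝕜] [NormedAddCommGroup E] [NormedSpace 𝕜 E]
  [NormedAddCommGroup F] [NormedSpace 𝕜 F]

theorem exists_bound_iff_continuous (f : E →ₗ.[𝕜] F) :
    (∃ C : ℝ, 0 ≤ C ∧ ∀ x : f.domain, ‖f x‖ ≤ C * ‖(x : E)‖) ↔ Continuous f := by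
  refine ⟨fun ⟨C, _, hC⟩ ↦ AddMonoidHomClass.continuous_of_bound f.toFun C hC, fun hf ↦ ?_⟩
  let g : f.domain →L[𝕜] F := ⟨f.toFun, hf⟩
  exact ⟨‖g‖, g.opNorm_nonneg, g.le_opNorm⟩

theorem toFun_graph_eq_preimage_graph (f : E →ₗ.[𝕜] F) :
    (f.toFun.graph : Set (f.domain × F)) = Prod.map (↑) id ⁻¹' (f.graph : Set (E × F)) := by
  ext ⟨x, y⟩
  simp [eq_comm]

theorem coe_graph_eq_range (f : E →ₗ.[𝕜] F) :
    (f.graph : Set (E × F)) = Set.range fun x : f.domain ↦ ((x : E), f x) :=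
  Set.ext fun _ ↦ f.mem_graph_iff'

theorem domain_inter_nonempty_iff (f : E →ₗ.[𝕜] F) (U : Set E) :
    ((f.domain : Set E) ∩ U).Nonempty ↔ ((f.graph : Set (E × F)) ∩ Prod.fst ⁻¹' U).Nonempty := by
  rw [← f.graph_map_fst_eq_domain, Submodule.map_coe, Set.image_inter_nonempty_iff]
  rfl

variable [CompleteSpace E] [CompleteSpace F]

theorem isClosed_domain_iff_continuous {f : E →ₗ.[𝕜] F} (hf : f.IsClosed) :
    _root_.IsClosed (f.domain : Set E) ↔ Continuous f := by
  constructor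
  · intro hdom
    have := hdom.completeSpace_coe
    refine f.toFun.continuous_of_isClosed_graph ?_
    rw [toFun_graph_eq_preimage_graph]
    exact hf.preimage (continuous_subtype_val.prodMap continuous_id)
  · intro hcont
    let g : f.domain →L[𝕜] F := ⟨f.toFun, hcont⟩
    have hφ : IsUniformInducing (fun x : f.domain ↦ ((x : E), f x)) :=
      .of_comp (uniformContinuous_subtype_val.prodMk g.uniformContinuous) uniformContinuous_fst
        (isUniformInducing_val _)
    have : CompleteSpace f.domain := by
      rw [completeSpace_iff_isComplete_range hφ, ← coe_graph_eq_range]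
      exact hf.isComplete
    exact (completeSpace_coe_iff_isComplete.mp this).isClosed

end LinearPMap

theorem random_closed_operator_bounded_iff_domain_closed_general
    {Ω : Type*} [MeasurableSpace Ω]
    {H : Type*} [NormedAddCommGroup H] [InnerProductSpace ℂ H] [CompleteSpace H]
    (T : Ω → (H →ₗ.[ℂ] H))
    (hclosed : ∀ ω, IsClosed ((T ω).graph : Set (H × H)))
    (hrandom : ∀ V : Set (H × H), IsOpen V →
      MeasurableSet {ω : Ω | (((T ω).graph : Set (H × H)) ∩ V).Nonempty}) :
    ((∀ ω, ∃ C : ℝ, 0 ≤ C ∧ ∀ f : (T ω).domain, ‖T ω f‖ ≤ C * ‖(f : H)‖) ↔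
      (∀ ω, IsClosed (((T ω).domain : Set H)))) ∧
    ((∀ ω, IsClosed (((T ω).domain : Set H))) →
      ∀ U : Set H, IsOpen U →
        MeasurableSet {ω : Ω | (((T ω).domain : Set H) ∩ U).Nonempty}) := by
  refine ⟨forall_congr' fun ω ↦ ?_, fun _ U hU ↦ ?_⟩
  · exact (T ω).exists_bound_iff_continuous.trans
      (LinearPMap.isClosed_domain_iff_continuous (hclosed ω)).symm
  · simp_rw [LinearPMap.domain_inter_nonempty_iff]
    exact hrandom _ (hU.preimage continuous_fst)

/-- For a random closed operator: every `T ω` is bounded iff every domain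
`dom (T ω)` is closed, and in that case the domain map is a random closed
subspace. -/
theorem random_closed_operator_bounded_iff_domain_closed
    {Ω : Type*} [MeasurableSpace Ω]
    {H : Type*} [NormedAddCommGroup H] [InnerProductSpace ℂ H] [CompleteSpace H]
    [SecondCountableTopology H]
    (T : Ω → (H →ₗ.[ℂ] H))
    (hclosed : ∀ ω, IsClosed ((T ω).graph : Set (H × H)))
    (hrandom : ∀ V : Set (H × H), IsOpen V →
      MeasurableSet {ω : Ω | (((T ω).graph : Set (H × H)) ∩ V).Nonempty}) :
    ((∀ ω, ∃ C : ℝ, 0 ≤ C ∧ ∀ f : (T ω).domain, ‖T ω f‖ ≤ C * ‖(f : H)‖) ↔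
      (∀ ω, IsClosed (((T ω).domain : Set H)))) ∧
    ((∀ ω, IsClosed (((T ω).domain : Set H))) →
      ∀ U : Set H, IsOpen U →
        MeasurableSet {ω : Ω | (((T ω).domain : Set H) ∩ U).Nonempty}) :=
  random_closed_operator_bounded_iff_domain_closed_general T hclosed hrandom
end

section
/- Let (Ω, 𝓔, μ) be a complete σ-finite measure space and X a Polish space with its Borel σ-algebra. If E ⊆ Ω × X is measurable with respect to the product σ-algebra 𝓔 ⊗ Borel(X), then the projection {ω ∈ Ω | ∃ x ∈ X, (ω, x) ∈ E} of E onto Ω belongs to 𝓔. -/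
/-!
Writing `E` as the preimage of a Borel set `E' ⊆ (ℕ → ℝ) × X` under `f × id`, with
`f : Ω → ℕ → ℝ` measurable, turns the projection of `E` into `f ⁻¹' A`, where `A`, the
projection of `E'`, is analytic. Analytic sets are null-measurable for s-finite measures by
the capacitability argument: if `g` is continuous on Baire space and `c < ν (range g)` for a
finite measure `ν`, bounding the coordinates one at a time while keeping the outer measure of
the image above `c` yields a closed subset of `range g` of measure at least `c`. Pulling back
along `f` and using completeness of `μ` finishes the proof.
-/

open MeasureTheory Set Filter Topology

theorem nullMeasurableSet_of_forall_lt_exists_measurableSet_subset {α : Type*}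
    [MeasurableSpace α] {μ : Measure α} {s : Set α} (hs : μ s ≠ ⊤)
    (h : ∀ c < μ s, ∃ t ⊆ s, MeasurableSet t ∧ c ≤ μ t) : NullMeasurableSet s μ := by
  rcases eq_zero_or_pos (μ s) with hs0 | hs0
  · exact .of_null hs0
  obtain ⟨c, -, hc, hc_lim⟩ := exists_seq_strictMono_tendsto' hs0
  choose t hts ht hct using fun n => h (c n) (hc n).2
  have hle : μ s ≤ μ (⋃ n, t n) :=
    le_of_tendsto' hc_lim fun n => (hct n).trans (measure_mono (subset_iUnion t n))
  exact (MeasurableSet.iUnion ht).nullMeasurableSet.congr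
    (ae_eq_of_subset_of_measure_ge (iUnion_subset hts) hle
      (MeasurableSet.iUnion ht).nullMeasurableSet hs)

theorem exists_lt_measure_image_inter_le {α Y : Type*} [MeasurableSpace Y] (μ : Measure Y)
    (g : α → Y) (u : α → ℕ) {C : Set α} {c : ENNReal} (hc : c < μ (g '' C)) :
    ∃ m, c < μ (g '' (C ∩ {x | u x ≤ m})) := by
  have hmono : Monotone fun m => g '' (C ∩ {x | u x ≤ m}) := fun m m' hm =>
    image_mono (inter_subset_inter_right _ fun x hx => le_trans hx hm)
  have hunion : ⋃ m, g '' (C ∩ {x | u x ≤ m}) = g '' C := by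
    rw [← image_iUnion, ← inter_iUnion, iUnion_eq_univ_iff.2 fun x => ⟨u x, le_refl (u x)⟩,
      inter_univ]
  rw [← hunion, hmono.measure_iUnion] at hc
  exact lt_iSup_iff.1 hc

theorem mem_range_of_forall_mem_closure_image {Y : Type*} [TopologicalSpace Y] [T2Space Y]
    {g : (ℕ → ℕ) → Y} (hg : Continuous g) {C : ℕ → Set (ℕ → ℕ)} (hC : Antitone C)
    (hbdd : ∀ i, ∃ k b, ∀ x ∈ C k, x i ≤ b) {y : Y} (hy : ∀ k, y ∈ closure (g '' C k)) :
    y ∈ range g := by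
  set F := (⨅ k, 𝓟 (C k)) ⊓ comap g (𝓝 y)
  have hF : F.NeBot := by
    rw [((hasBasis_iInf_principal hC.directed_ge).inf ((𝓝 y).basis_sets.comap g)).neBot_iff]
    rintro ⟨k, U⟩ hU
    obtain ⟨_, hzU, x, hx, rfl⟩ := mem_closure_iff_nhds.1 (hy k) U hU.2
    exact ⟨x, hx, hzU⟩
  set U := Ultrafilter.of F
  have hUF : ↑U ≤ F := Ultrafilter.of_le F
  have hcoord : ∀ i, ∃ a, Tendsto (fun x : ℕ → ℕ => x i) ↑U (𝓝 a) := by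
    intro i
    obtain ⟨k, b, hb⟩ := hbdd i
    have hCk : C k ∈ U := le_principal_iff.1 (hUF.trans (inf_le_left.trans (iInf_le _ k)))
    have hbU : ↑(U.map fun x => x i) ≤ 𝓟 (Iic b) := by
      rw [Ultrafilter.coe_map]
      exact le_principal_iff.2 (mem_map.2 (mem_of_superset hCk hb))
    obtain ⟨a, -, ha⟩ := (finite_Iic b).isCompact.ultrafilter_le_nhds _ hbU
    exact ⟨a, ha⟩
  choose a ha using hcoord
  have hga : Tendsto g ↑U (𝓝 (g a)) := (hg.tendsto a).comp (tendsto_pi_nhds.2 ha)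
  have hgy : Tendsto g ↑U (𝓝 y) := tendsto_iff_comap.2 (hUF.trans inf_le_right)
  exact ⟨a, tendsto_nhds_unique hga hgy⟩

theorem exists_measurableSet_subset_range_le_measure {Y : Type*} [TopologicalSpace Y]
    [T2Space Y] [MeasurableSpace Y] [OpensMeasurableSpace Y] (μ : Measure Y) [IsFiniteMeasure μ]
    {g : (ℕ → ℕ) → Y} (hg : Continuous g) {c : ENNReal} (hc : c < μ (range g)) :
    ∃ M ⊆ range g, MeasurableSet M ∧ c ≤ μ M := by
  -- stated for every `D`, so that `choose` yields a step function to iterate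
  have hstep : ∀ (k : ℕ) (D : Set (ℕ → ℕ)), ∃ m,
      c < μ (g '' D) → c < μ (g '' (D ∩ {x | x k ≤ m})) := by
    intro k D
    by_cases hD : c < μ (g '' D)
    · exact (exists_lt_measure_image_inter_le μ g (fun x => x k) hD).imp fun _ h _ => h
    · exact ⟨0, fun h => absurd h hD⟩
  choose m hm using hstep
  let C : ℕ → Set (ℕ → ℕ) := fun k => Nat.rec univ (fun k D => D ∩ {x | x k ≤ m k D}) k
  have hC_succ : ∀ k, C (k + 1) = C k ∩ {x | x k ≤ m k (C k)} := fun _ => rfl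
  have hC : Antitone C := antitone_nat_of_succ_le fun k => by
    rw [hC_succ]; exact inter_subset_left
  have hcC : ∀ k, c < μ (g '' C k) := by
    intro k
    induction k with
    | zero => simpa [C] using hc
    | succ k ih => exact hm k (C k) ih
  have hclosure : Antitone fun k => closure (g '' C k) := fun k l hkl =>
    closure_mono (image_mono (hC hkl))
  refine ⟨⋂ k, closure (g '' C k), fun y hy => ?_,
    .iInter fun k => isClosed_closure.measurableSet, ?_⟩
  · refine mem_range_of_forall_mem_closure_image hg hC (fun i => ⟨i + 1, m i (C i), ?_⟩)
      (mem_iInter.1 hy)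
    intro x hx
    rw [hC_succ] at hx
    exact hx.2
  · rw [hclosure.measure_iInter (fun _ => isClosed_closure.nullMeasurableSet)
      ⟨0, measure_ne_top μ _⟩]
    exact le_iInf fun k => (hcC k).le.trans (measure_mono subset_closure)

theorem MeasureTheory.AnalyticSet.nullMeasurableSet_s15 {α : Type*} [TopologicalSpace α] [T2Space α]
    [MeasurableSpace α] [OpensMeasurableSpace α] {s : Set α} (hs : AnalyticSet s)
    (μ : Measure α) [SFinite μ] : NullMeasurableSet s μ := by
  obtain ⟨ν, _, hμν, -⟩ := exists_isFiniteMeasure_absolutelyContinuous μ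
  refine NullMeasurableSet.mono_ac ?_ hμν
  rw [AnalyticSet] at hs
  rcases hs with rfl | ⟨g, hg, rfl⟩
  · exact .empty
  · exact nullMeasurableSet_of_forall_lt_exists_measurableSet_subset (measure_ne_top ν _)
      fun c hc => exists_measurableSet_subset_range_le_measure ν hg hc

theorem MeasurableSet.exists_eq_preimage_prodMap {Ω X : Type*} [MeasurableSpace Ω]
    [MeasurableSpace X] {E : Set (Ω × X)} (hE : MeasurableSet E) :
    ∃ f : Ω → ℕ → ℝ, Measurable f ∧
      ∃ E' : Set ((ℕ → ℝ) × X), MeasurableSet E' ∧ E = Prod.map f id ⁻¹' E' := by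
  rw [← generateFrom_prod] at hE
  induction E, hE using MeasurableSpace.generateFrom_induction with
  | hC _ hst =>
    obtain ⟨s, hs, t, ht, rfl⟩ := hst
    refine ⟨fun ω _ => s.indicator 1 ω,
      measurable_pi_lambda _ fun _ => measurable_const.indicator hs, {y | y 0 = 1} ×ˢ t,
      (measurableSet_eq_fun (measurable_pi_apply 0) measurable_const).prod ht, ?_⟩
    ext ⟨ω, x⟩
    simp [Set.indicator_eq_one_iff_mem]
  | empty => exact ⟨0, measurable_const, ∅, .empty, rfl⟩
  | compl _ _ ih =>
    obtain ⟨f, hf, E', hE', rfl⟩ := ih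
    exact ⟨f, hf, E'ᶜ, hE'.compl, rfl⟩
  | iUnion E _ ih =>
    choose f hf E' hE' hEq using ih
    let π : ℕ → (ℕ → ℝ) → ℕ → ℝ := fun n y m => y (Nat.pair n m)
    have hπ : ∀ n, Measurable (π n) := fun _ =>
      measurable_pi_lambda _ fun _ => measurable_pi_apply _
    let F : Ω → ℕ → ℝ := fun ω j => f j.unpair.1 ω j.unpair.2
    have hπF : ∀ n, π n ∘ F = f n := fun n => by ext ω m; simp [π, F]
    refine ⟨F, measurable_pi_lambda _ fun j => (measurable_pi_apply _).comp (hf _),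
      ⋃ n, Prod.map (π n) id ⁻¹' E' n, .iUnion fun n => (hπ n).prodMap measurable_id (hE' n), ?_⟩
    simp_rw [preimage_iUnion, ← preimage_comp, Prod.map_comp_map, hπF, Function.comp_id, hEq]

/-- Measurable projection theorem for complete σ-finite measure spaces: the
projection onto `Ω` of a set measurable for the product σ-algebra of a
complete σ-finite measure space with a Polish space is measurable. -/
theorem measurable_projection_of_complete_sigmaFinite
    {Ω : Type*} [MeasurableSpace Ω] (μ : Measure Ω) [SigmaFinite μ]
    (hμ : μ.IsComplete)
    {X : Type*} [TopologicalSpace X] [PolishSpace X]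
    [MeasurableSpace X] [BorelSpace X]
    (E : Set (Ω × X)) (hE : MeasurableSet E) :
    MeasurableSet {ω : Ω | ∃ x : X, (ω, x) ∈ E} := by
  obtain ⟨f, hf, E', hE', rfl⟩ := hE.exists_eq_preimage_prodMap
  have hproj : {ω | ∃ x, (ω, x) ∈ Prod.map f id ⁻¹' E'} = f ⁻¹' (Prod.fst '' E') := by
    ext ω; simp
  rw [hproj]
  exact ((hE'.analyticSet_image measurable_fst).nullMeasurableSet_s15 (μ.map f)).preimage
    (hf.quasiMeasurePreserving μ) |>.measurable_of_complete
end

section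
/- Let (Ω, 𝓔, μ) be a complete σ-finite measure space, X a Polish space, and F : Ω → Set X a random closed set, i.e. each F ω is closed and {ω | (F ω ∩ U).Nonempty} ∈ 𝓔 for every open U ⊆ X. Then for every Borel set E ⊆ X the set {ω ∈ Ω | (F ω ∩ E).Nonempty} belongs to 𝓔. -/
/-!
Code a closed set `C` by the indicator of the family of basic open sets it meets, a point of the
Cantor space `ι → Bool`. Since `C` is closed, `x ∈ C` iff the code of `C` lies above the code
of `x`, so `C` meets `E` iff its code lies in the upper closure of the codes of the points of `E`;
that upper set is a projection of a Borel set, hence analytic. An analytic set is the Souslin operation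
applied to closed sets, and the code of `F ω` depends measurably on `ω`, so the hitting set of
`E` is the Souslin operation applied to measurable subsets of `Ω`. By the Lusin–Sierpiński
theorem such a set is null-measurable, hence measurable since `μ` is complete.
-/

open MeasureTheory Set TopologicalSpace PiNat

theorem exists_forall_res_of_forall_exists_cons {P : List ℕ → Prop} (h_nil : P [])
    (h_cons : ∀ s, P s → ∃ m, P (m :: s)) : ∃ x : ℕ → ℕ, ∀ n, P (res x n) := by
  choose! next h_next using h_cons
  let path : ℕ → List ℕ := fun n => Nat.rec [] (fun _ s => next s :: s) n
  have h_path : ∀ n, P (path n) := fun n => by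
    induction n with
    | zero => exact h_nil
    | succ n ih => exact h_next _ ih
  refine ⟨fun n => next (path n), fun n => ?_⟩
  suffices res (fun n => next (path n)) n = path n from this ▸ h_path n
  induction n with
  | zero => rfl
  | succ n ih => rw [res_succ, ih]

section Souslin

variable {α : Type*}

/-- `res x n = [x (n-1), …, x 0]` lists the newest entry first, so the children of a node `s`
of the tree `List ℕ` are the lists `m :: s`. -/
def souslin (A : List ℕ → Set α) : Set α :=
  ⋃ x : ℕ → ℕ, ⋂ n, A (res x n)

def souslinThrough (A : List ℕ → Set α) (s : List ℕ) : Set α :=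
  ⋃ x ∈ {x : ℕ → ℕ | res x s.length = s}, ⋂ n, A (res x n)

variable (A : List ℕ → Set α)

theorem souslinThrough_nil : souslinThrough A [] = souslin A := by
  simp [souslinThrough, souslin]

theorem souslinThrough_subset (s : List ℕ) : souslinThrough A s ⊆ A s :=
  iUnion₂_subset fun x hx => (hx : res x s.length = s) ▸ iInter_subset _ s.length

theorem souslinThrough_subset_iUnion_cons (s : List ℕ) :
    souslinThrough A s ⊆ ⋃ m, souslinThrough A (m :: s) :=
  iUnion₂_subset fun x hx => subset_iUnion_of_subset (x s.length) <|
    subset_biUnion_of_mem (u := fun x => ⋂ n, A (res x n))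
      (show res x (s.length + 1) = x s.length :: s by rw [res_succ, hx])

theorem preimage_souslin {β : Type*} (f : β → α) : f ⁻¹' souslin A = souslin (f ⁻¹' A ·) := by
  simp [souslin, preimage_iInter]

end Souslin

theorem measure_toMeasurable_diff_eq_zero {Ω : Type*} [MeasurableSpace Ω] {μ : Measure Ω}
    [SFinite μ] {s t : Set Ω} (hst : s ⊆ t) (ht : MeasurableSet t) :
    μ (toMeasurable μ s \ t) = 0 := by
  rw [sdiff_eq, Measure.measure_toMeasurable_inter_of_sFinite ht.compl, ← sdiff_eq,
    sdiff_eq_empty.2 hst, measure_empty]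

/-- Lusin–Sierpiński. Take measurable hulls `H s ⊆ A s` of the sets `souslinThrough A s`. A point
of `H []` that is not in `souslin A` cannot follow a branch inside the hulls forever, so it lies in
some `H s \ ⋃ m, H (m :: s)`, and each of these countably many sets is null. -/
theorem nullMeasurableSet_souslin {Ω : Type*} [MeasurableSpace Ω] (μ : Measure Ω) [SFinite μ]
    {A : List ℕ → Set Ω} (hA : ∀ s, MeasurableSet (A s)) : NullMeasurableSet (souslin A) μ := by
  set H : List ℕ → Set Ω := fun s => toMeasurable μ (souslinThrough A s) ∩ A s
  have hH : ∀ s, MeasurableSet (H s) := fun s => (measurableSet_toMeasurable _ _).inter (hA s)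
  have subset_H : ∀ s, souslinThrough A s ⊆ H s := fun s =>
    subset_inter (subset_toMeasurable _ _) (souslinThrough_subset A s)
  set Z := ⋃ s, H s \ ⋃ m, H (m :: s)
  have hZ : μ Z = 0 := measure_iUnion_null fun s =>
    measure_mono_null (sdiff_subset_sdiff_left inter_subset_left) <|
      measure_toMeasurable_diff_eq_zero
        ((souslinThrough_subset_iUnion_cons A s).trans (iUnion_mono fun m => subset_H _))
        (MeasurableSet.iUnion fun m => hH _)
  have h_diff : H [] \ souslin A ⊆ Z := by
    rintro ω ⟨hω, hω_not⟩
    by_contra hωZ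
    obtain ⟨x, hx⟩ := exists_forall_res_of_forall_exists_cons (P := fun s => ω ∈ H s) hω
      fun s hs => by
        by_contra h
        exact hωZ (mem_iUnion.2 ⟨s, hs, by simpa using h⟩)
    exact hω_not (mem_iUnion.2 ⟨x, mem_iInter.2 fun n => (hx n).2⟩)
  rw [← sdiff_sdiff_cancel_left ((souslinThrough_nil A).symm.subset.trans (subset_H []))]
  exact (hH []).nullMeasurableSet.diff (NullMeasurableSet.of_null (measure_mono_null h_diff hZ))

theorem iInter_closure_image_cylinder {X : Type*} [TopologicalSpace X] [T3Space X]
    {g : (ℕ → ℕ) → X} (hg : Continuous g) (x : ℕ → ℕ) :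
    ⋂ n, closure (g '' cylinder x n) = {g x} := by
  refine Subset.antisymm (fun y hy => ?_) <| singleton_subset_iff.2 <| mem_iInter.2 fun n =>
    subset_closure (mem_image_of_mem g (self_mem_cylinder x n))
  by_contra hne
  obtain ⟨V, hV, hV_closed, hV_ne⟩ :=
    exists_mem_nhds_isClosed_subset (compl_singleton_mem_nhds (Ne.symm hne))
  obtain ⟨_, ⟨z, n, rfl⟩, hxz, hz⟩ :=
    (isTopologicalBasis_cylinders fun _ => ℕ).mem_nhds_iff.1 (hg.continuousAt hV)
  rw [← mem_cylinder_iff_eq.1 hxz] at hz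
  exact hV_ne (closure_minimal (image_subset_iff.2 hz) hV_closed (mem_iInter.1 hy n)) rfl

theorem MeasureTheory.AnalyticSet.exists_isClosed_souslin_eq {X : Type*} [TopologicalSpace X]
    [T3Space X] {s : Set X} (hs : AnalyticSet s) :
    ∃ A : List ℕ → Set X, (∀ l, IsClosed (A l)) ∧ souslin A = s := by
  rw [AnalyticSet] at hs
  rcases hs with rfl | ⟨g, hg, rfl⟩
  · exact ⟨fun _ => ∅, fun _ => isClosed_empty, by simp [souslin, iInter_const]⟩
  refine ⟨fun l => closure (g '' {y | res y l.length = l}), fun _ => isClosed_closure, ?_⟩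
  simp only [souslin, res_length, ← cylinder_eq_res, iInter_closure_image_cylinder hg,
    iUnion_singleton_eq_range]

section Code

variable {X ι : Type*} (U : ι → Set X)

open scoped Classical in
noncomputable def pointCode (x : X) : ι → Bool := fun i => decide (x ∈ U i)

open scoped Classical in
noncomputable def hitCode (C : Set X) : ι → Bool := fun i => decide (C ∩ U i).Nonempty

variable {U}

theorem measurable_hitCode {Ω : Type*} [MeasurableSpace Ω] {F : Ω → Set X}
    (hF : ∀ i, MeasurableSet {ω | (F ω ∩ U i).Nonempty}) :
    Measurable fun ω => hitCode U (F ω) :=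
  measurable_pi_lambda _ fun i => measurable_to_bool <| by
    simpa only [hitCode, preimage, mem_singleton_iff, decide_eq_true_eq] using hF i

theorem measurableSet_setOf_pointCode_le [MeasurableSpace X] (hU : ∀ i, MeasurableSet (U i))
    [Countable ι] : MeasurableSet {p : (ι → Bool) × X | pointCode U p.2 ≤ p.1} := by
  have h_eq : {p : (ι → Bool) × X | pointCode U p.2 ≤ p.1} =
      ⋂ i, (Prod.snd ⁻¹' U i)ᶜ ∪ (fun p : (ι → Bool) × X => p.1 i) ⁻¹' {true} := by
    ext p
    simp [Pi.le_def, Bool.le_iff_imp, pointCode, imp_iff_not_or]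
  rw [h_eq]
  exact MeasurableSet.iInter fun i => (measurable_snd (hU i)).compl.union
    (((measurable_pi_apply i).comp measurable_fst) (measurableSet_singleton true))

variable [TopologicalSpace X]

theorem pointCode_le_hitCode_iff (hU : IsTopologicalBasis (range U)) {C : Set X}
    (hC : IsClosed C) {x : X} : pointCode U x ≤ hitCode U C ↔ x ∈ C := by
  rw [← hC.closure_eq, hU.mem_closure_iff]
  simp [Pi.le_def, Bool.le_iff_imp, pointCode, hitCode, inter_comm]

theorem inter_nonempty_iff_hitCode_mem_upperClosure (hU : IsTopologicalBasis (range U))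
    {C : Set X} (hC : IsClosed C) (E : Set X) :
    (C ∩ E).Nonempty ↔ hitCode U C ∈ upperClosure (pointCode U '' E) := by
  simp [mem_upperClosure, pointCode_le_hitCode_iff hU hC, Set.Nonempty, and_comm]

theorem analyticSet_upperClosure_image_pointCode [Countable ι] [PolishSpace X]
    [MeasurableSpace X] [BorelSpace X] (hU : ∀ i, MeasurableSet (U i)) {E : Set X}
    (hE : MeasurableSet E) :
    AnalyticSet (upperClosure (pointCode U '' E) : Set (ι → Bool)) := by
  have h_proj : (upperClosure (pointCode U '' E) : Set (ι → Bool)) =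
      Prod.fst '' (Prod.snd ⁻¹' E ∩ {p : (ι → Bool) × X | pointCode U p.2 ≤ p.1}) := by
    ext c
    simp [mem_upperClosure]
  rw [h_proj]
  exact MeasurableSet.analyticSet_image
    ((measurable_snd hE).inter (measurableSet_setOf_pointCode_le hU)) measurable_fst

end Code

/-- A random closed set in a Polish space, over a complete σ-finite measure
space, hits every Borel set measurably. -/
theorem random_closed_set_hits_borel_measurably
    {Ω : Type*} [MeasurableSpace Ω] (μ : Measure Ω) [SigmaFinite μ]
    (hμ : μ.IsComplete)
    {X : Type*} [TopologicalSpace X] [PolishSpace X]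
    [MeasurableSpace X] [BorelSpace X]
    (F : Ω → Set X) (hFclosed : ∀ ω, IsClosed (F ω))
    (hFmeas : ∀ U : Set X, IsOpen U → MeasurableSet {ω : Ω | (F ω ∩ U).Nonempty})
    (E : Set X) (hE : MeasurableSet E) :
    MeasurableSet {ω : Ω | (F ω ∩ E).Nonempty} := by
  have := hμ
  have : Countable (countableBasis X) := (countable_countableBasis X).to_subtype
  set U : countableBasis X → Set X := Subtype.val
  have hU : IsTopologicalBasis (range U) := by simpa [U] using isBasis_countableBasis X
  have hU_open : ∀ i, IsOpen (U i) := fun i => hU.isOpen (mem_range_self i)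
  have h_hit : {ω | (F ω ∩ E).Nonempty} =
      (fun ω => hitCode U (F ω)) ⁻¹' upperClosure (pointCode U '' E) := by
    ext ω
    exact inter_nonempty_iff_hitCode_mem_upperClosure hU (hFclosed ω) E
  obtain ⟨A, hA_closed, hA⟩ := (analyticSet_upperClosure_image_pointCode
    (fun i => (hU_open i).measurableSet) hE).exists_isClosed_souslin_eq
  rw [h_hit, ← hA, preimage_souslin]
  refine (nullMeasurableSet_souslin μ fun s => ?_).measurable_of_complete
  exact measurable_hitCode (fun i => hFmeas _ (hU_open i)) (hA_closed s).measurableSet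
end

section
/- Let (Ω, 𝓔) be a measurable space, H a separable complex Hilbert space, and X : Ω → Submodule ℂ H a random closed subspace, i.e. each X ω is closed and {ω | ((X ω : Set H) ∩ U).Nonempty} is measurable for every open U ⊆ H. Then there exists a sequence of measurable maps eₙ : Ω → H such that for every ω: (1) eₙ ω ∈ X ω for all n; (2) ‖eₙ ω‖ = 1 or eₙ ω = 0 for each n; (3) ⟪eₘ ω, eₙ ω⟫ = 0 for m ≠ n; and (4) the closure of the linear span of {eₙ ω | n ∈ ℕ} equals X ω. That is, every random closed subspace admits a random orthonormal basis. -/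
/-!
Project a dense sequence `dⱼ` of `H` orthogonally onto `X ω` and apply Gram–Schmidt pointwise in
`ω`. The projections are dense in `X ω`, so the resulting vectors span it. For measurability,
`‖P_ω u‖² = ‖u‖² - infDist(u, X ω)²` is measurable since the hit sets of balls are, so by
polarization and self-adjointness every `ω ↦ ⟪w, P_ω v⟫` is measurable; this suffices because
`x ↦ (⟪dₖ, x⟫)ₖ` is a continuous injection of the Polish space `H` into `ℕ → ℂ`, hence a
measurable embedding (Lusin–Souslin).
-/

open Metric Set Submodule InnerProductSpace

section

variable {Ω : Type*} [MeasurableSpace Ω]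

theorem measurable_infDist_of_measurableSet_inter_nonempty {E : Type*} [PseudoMetricSpace E]
    {S : Ω → Set E} (hS : ∀ ω, (S ω).Nonempty)
    (hmeas : ∀ U : Set E, IsOpen U → MeasurableSet {ω | (S ω ∩ U).Nonempty}) (x : E) :
    Measurable fun ω => infDist x (S ω) := by
  refine measurable_of_Iio fun r => ?_
  have : (fun ω => infDist x (S ω)) ⁻¹' Iio r = {ω | (S ω ∩ ball x r).Nonempty} := by
    ext ω
    simp only [mem_preimage, mem_Iio, infDist_lt_iff (hS ω), mem_ofPred_eq, mem_ball',
      Set.Nonempty, mem_inter_iff]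
  rw [this]
  exact hmeas _ isOpen_ball

variable {𝕜 E : Type*} [RCLike 𝕜] [NormedAddCommGroup E] [InnerProductSpace 𝕜 E]

theorem measurable_of_forall_measurable_inner [CompleteSpace E] [SecondCountableTopology E]
    [MeasurableSpace E] [BorelSpace E] {f : Ω → E}
    (hf : ∀ w, Measurable fun ω => ⟪w, f ω⟫_𝕜) : Measurable f := by
  obtain ⟨d, hd⟩ := TopologicalSpace.exists_dense_seq E
  let Φ : E → ℕ → 𝕜 := fun x k => ⟪d k, x⟫_𝕜
  have hΦ : Continuous Φ := continuous_pi fun k => continuous_const.inner continuous_id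
  have hΦinj : Function.Injective Φ := by
    intro x y hxy
    rw [← sub_eq_zero, ← inner_self_eq_zero (𝕜 := 𝕜)]
    refine hd.induction_on (p := fun w => ⟪w, x - y⟫_𝕜 = 0) (x - y)
      (isClosed_eq (continuous_id.inner continuous_const) continuous_const) fun k => ?_
    simpa [inner_sub_right, sub_eq_zero] using congr_fun hxy k
  exact (hΦ.measurableEmbedding hΦinj).measurable_comp_iff.1
    (measurable_pi_iff.2 fun k => hf (d k))

theorem Submodule.norm_starProjection_sq_add_infDist_sq (K : Submodule 𝕜 E)
    [K.HasOrthogonalProjection] (u : E) :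
    ‖K.starProjection u‖ ^ 2 + infDist u K ^ 2 = ‖u‖ ^ 2 := by
  have hdist : infDist u K = ‖u - K.starProjection u‖ := by
    rw [starProjection_minimal, infDist_eq_iInf]
    simp only [dist_eq_norm]
    rfl
  rw [hdist, norm_sq_eq_add_norm_sq_starProjection u K, starProjection_orthogonal_val]

theorem Submodule.closure_span_starProjection_of_denseRange {ι : Type*} (K : Submodule 𝕜 E)
    [K.HasOrthogonalProjection] {d : ι → E} (hd : DenseRange d) :
    closure (span 𝕜 (range fun j => K.starProjection (d j)) : Set E) = K := by
  have hK : IsClosed (K : Set E) := K.orthogonal_orthogonal ▸ Kᗮ.isClosed_orthogonal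
  refine (closure_minimal ?_ hK).antisymm fun x hx => ?_
  · exact span_le.2 (range_subset_iff.2 fun j => starProjection_apply_mem K (d j))
  · rw [← starProjection_eq_self_iff.2 hx]
    refine closure_mono subset_span ?_
    rw [← Function.comp_def, range_comp]
    exact image_closure_subset_closure_image K.starProjection.continuous
      (mem_image_of_mem _ (hd.closure_range ▸ mem_univ x))

theorem measurable_starProjection_of_measurableSet_inter_nonempty [CompleteSpace E]
    [SecondCountableTopology E] [MeasurableSpace E] [BorelSpace E]
    {K : Ω → Submodule 𝕜 E} [∀ ω, (K ω).HasOrthogonalProjection]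
    (hmeas : ∀ U : Set E, IsOpen U → MeasurableSet {ω | ((K ω : Set E) ∩ U).Nonempty}) (v : E) :
    Measurable fun ω => (K ω).starProjection v := by
  have hnorm_sq (u : E) : Measurable fun ω => ‖(K ω).starProjection u‖ ^ 2 := by
    simp_rw [eq_sub_of_add_eq ((K _).norm_starProjection_sq_add_infDist_sq u)]
    exact measurable_const.sub <| (measurable_infDist_of_measurableSet_inter_nonempty
      (fun ω => ⟨0, (K ω).zero_mem⟩) hmeas u).pow_const 2
  refine measurable_of_forall_measurable_inner (𝕜 := 𝕜) fun w => ?_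
  have hpolar : (fun ω => ⟪w, (K ω).starProjection v⟫_𝕜) = fun ω =>
      (((‖(K ω).starProjection (w + v)‖ ^ 2 : ℝ) : 𝕜) -
          ((‖(K ω).starProjection (w - v)‖ ^ 2 : ℝ) : 𝕜) +
        (((‖(K ω).starProjection (w - (RCLike.I : 𝕜) • v)‖ ^ 2 : ℝ) : 𝕜) -
          ((‖(K ω).starProjection (w + (RCLike.I : 𝕜) • v)‖ ^ 2 : ℝ) : 𝕜)) * RCLike.I) / 4 := by
    funext ω
    rw [← starProjection_eq_self_iff.2 ((K ω).starProjection_apply_mem v),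
      ← inner_starProjection_left_eq_right, inner_eq_sum_norm_sq_div_four]
    simp only [map_add, map_sub, map_smul, RCLike.ofReal_pow]
  rw [hpolar]
  fun_prop

section GramSchmidt

variable {ι : Type*} [LinearOrder ι] [LocallyFiniteOrderBot ι] [WellFoundedLT ι]

theorem gramSchmidtNormed_mem_span_range (f : ι → E) (n : ι) :
    gramSchmidtNormed 𝕜 f n ∈ span 𝕜 (range f) := by
  rw [← span_gramSchmidt 𝕜 f, ← span_gramSchmidtNormed_range]
  exact subset_span (mem_range_self n)

theorem gramSchmidtNormed_norm_eq_one_or_eq_zero (f : ι → E) (n : ι) :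
    ‖gramSchmidtNormed 𝕜 f n‖ = 1 ∨ gramSchmidtNormed 𝕜 f n = 0 :=
  or_iff_not_imp_right.2 gramSchmidtNormed_unit_length'

theorem inner_gramSchmidtNormed_eq_zero (f : ι → E) {m n : ι} (hmn : m ≠ n) :
    ⟪gramSchmidtNormed 𝕜 f m, gramSchmidtNormed 𝕜 f n⟫_𝕜 = 0 := by
  simp only [gramSchmidtNormed, inner_smul_left, inner_smul_right,
    gramSchmidt_orthogonal 𝕜 f hmn, mul_zero]

variable [SecondCountableTopology E] [MeasurableSpace E] [BorelSpace E]

theorem measurable_gramSchmidt {f : ι → Ω → E} (hf : ∀ i, Measurable (f i)) (n : ι) :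
    Measurable fun ω => gramSchmidt 𝕜 (fun i => f i ω) n := by
  induction n using WellFoundedLT.induction with
  | _ n ih =>
    simp_rw [gramSchmidt_def 𝕜 _ n, starProjection_singleton]
    refine (hf n).sub (Finset.measurable_sum _ fun i hi => ?_)
    have := ih i (Finset.mem_Iio.1 hi)
    fun_prop

theorem measurable_gramSchmidtNormed {f : ι → Ω → E} (hf : ∀ i, Measurable (f i)) (n : ι) :
    Measurable fun ω => gramSchmidtNormed 𝕜 (fun i => f i ω) n := by
  have := measurable_gramSchmidt (𝕜 := 𝕜) hf n
  unfold gramSchmidtNormed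
  fun_prop

end GramSchmidt

end

/-- Every random closed subspace of a separable complex Hilbert space admits a
random orthonormal basis: a sequence of measurable maps `eₙ : Ω → H` whose
values lie in `X ω`, are unit vectors or zero, are pairwise orthogonal, and
whose closed linear span is `X ω`. -/
theorem random_closed_subspace_has_random_orthonormal_basis
    {Ω : Type*} [MeasurableSpace Ω]
    {H : Type*} [NormedAddCommGroup H] [InnerProductSpace ℂ H] [CompleteSpace H]
    [SecondCountableTopology H] [MeasurableSpace H] [BorelSpace H]
    (X : Ω → Submodule ℂ H) (hXclosed : ∀ ω, IsClosed ((X ω : Set H)))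
    (hXmeas : ∀ U : Set H, IsOpen U →
      MeasurableSet {ω : Ω | ((X ω : Set H) ∩ U).Nonempty}) :
    ∃ e : ℕ → Ω → H, (∀ n, Measurable (e n)) ∧ ∀ ω : Ω,
      (∀ n, e n ω ∈ X ω) ∧
      (∀ n, ‖e n ω‖ = 1 ∨ e n ω = 0) ∧
      (∀ m n, m ≠ n → ⟪e m ω, e n ω⟫_ℂ = 0) ∧
      closure ((Submodule.span ℂ (Set.range fun n => e n ω) : Submodule ℂ H) : Set H)
        = (X ω : Set H) := by
  have (ω : Ω) : (X ω).HasOrthogonalProjection :=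
    haveI := (hXclosed ω).completeSpace_coe
    inferInstance
  obtain ⟨d, hd⟩ := TopologicalSpace.exists_dense_seq H
  let f (j : ℕ) (ω : Ω) : H := (X ω).starProjection (d j)
  refine ⟨fun n ω => gramSchmidtNormed ℂ (fun j => f j ω) n, measurable_gramSchmidtNormed
    fun j => measurable_starProjection_of_measurableSet_inter_nonempty hXmeas (d j),
    fun ω => ⟨fun n => ?_, gramSchmidtNormed_norm_eq_one_or_eq_zero _,
      fun m n => inner_gramSchmidtNormed_eq_zero _, ?_⟩⟩
  · exact span_le.2 (range_subset_iff.2 fun j => starProjection_apply_mem _ _)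
      (gramSchmidtNormed_mem_span_range _ n)
  · rw [span_gramSchmidtNormed_range, span_gramSchmidt]
    exact (X ω).closure_span_starProjection_of_denseRange hd
end
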